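/- arXiv:2301.08206 — 7 statements merged into one kernel-verified Lean document; each statement's English description precedes it below -/
import Mathlib

section
/- Let $c$ be a Coxeter element of the dihedral group $I_2(m)$ of order $2m$ (with $m \geq 2$), and fix $p \in (0,1)$. The expected number of steps of the Ungarian Markov chain on the $c$-Cambrian lattice (whose Hasse diagram consists of the two chains $e \lessdot \alpha_1 \lessdot \alpha_2 \lessdot \cdots \lessdot \alpha_m$ and $e \lessdot t \lessdot \alpha_m$) to go from the top element $\alpha_m$ to the bottom element $e$ equals $\frac{1 + m(1-p)}{2p - p^2}$. -/
/-!
First-step analysis. From a state `x` with a single lower cover `z` the chain moves to `z` with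
probability `p` and otherwise stays, so `p * E x = p * E z + 1`; this gives `p * E t = 1` and,
climbing the long chain, `p * E (α k) = k` for `k < m`. The top has the two covers `α (m - 1)`
and `t`, whose meet is `⊥`, so `E ⊤ = 1 + (1 - p)² E ⊤ + p (1 - p) (E (α (m - 1)) + E t)`, which
solves to `(2p - p²) E ⊤ = 1 + m (1 - p)`.
-/

open Finset
open scoped Classical

/-- The set of elements covered by `x`. -/
noncomputable def ungarCov {L : Type*} [Fintype L] [Preorder L] (x : L) : Finset L :=
  Finset.univ.filter (fun y => y ⋖ x)

/-- Transition probabilities of the Ungarian Markov chain. -/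
noncomputable def ungarP {L : Type*} [Fintype L] [Lattice L] [BoundedOrder L]
    (p : ℝ) (x y : L) : ℝ :=
  ∑ T ∈ (ungarCov x).powerset.filter (fun T => (insert x T).inf id = y),
    p ^ T.card * (1 - p) ^ ((ungarCov x).card - T.card)

/-- `E` is the expected-number-of-steps-to-`⊥` function of the Ungarian Markov chain:
it satisfies the defining first-step recurrence. -/
def IsUngarExp {L : Type*} [Fintype L] [Lattice L] [BoundedOrder L]
    (p : ℝ) (E : L → ℝ) : Prop :=
  E ⊥ = 0 ∧ ∀ x : L, x ≠ ⊥ → E x = 1 + ∑ y : L, ungarP p x y * E y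

lemma le_of_mem_ungarCov {L : Type*} [Fintype L] [Preorder L] {x y : L} (h : y ∈ ungarCov x) :
    y ≤ x :=
  (mem_filter.mp h).2.le

section Ungarian

variable {L : Type*} [Fintype L] [Lattice L] [BoundedOrder L]

lemma sum_ungarP_mul (p : ℝ) (x : L) (f : L → ℝ) :
    ∑ y, ungarP p x y * f y = ∑ T ∈ (ungarCov x).powerset,
      p ^ #T * (1 - p) ^ (#(ungarCov x) - #T) * f ((insert x T).inf id) := by
  simp only [ungarP, sum_mul, sum_filter]
  rw [sum_comm]
  exact sum_congr rfl fun T _ => by simp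

namespace IsUngarExp

variable {p : ℝ} {E : L → ℝ}

lemma mul_eq_of_ungarCov_eq_singleton (hE : IsUngarExp p E) {x z : L} (hx : x ≠ ⊥)
    (hcov : ungarCov x = {z}) : p * E x = p * E z + 1 := by
  have hzx : z ≤ x := le_of_mem_ungarCov (hcov ▸ mem_singleton_self z)
  have hrec := hE.2 x hx
  rw [sum_ungarP_mul, hcov, ← insert_empty_eq z, sum_powerset_insert (notMem_empty z)] at hrec
  simp [inf_eq_right.mpr hzx] at hrec
  linarith

lemma eq_of_ungarCov_eq_pair (hE : IsUngarExp p E) {x a b : L} (hx : x ≠ ⊥) (hab : a ≠ b)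
    (hcov : ungarCov x = {a, b}) :
    E x = 1 + (1 - p) ^ 2 * E x + p * (1 - p) * (E a + E b) + p ^ 2 * E (a ⊓ b) := by
  have hax : a ≤ x := le_of_mem_ungarCov (hcov ▸ mem_insert_self a {b})
  have hbx : b ≤ x := le_of_mem_ungarCov (hcov ▸ mem_insert_of_mem (mem_singleton_self b))
  have hrec := hE.2 x hx
  rw [sum_ungarP_mul, hcov, ← insert_empty_eq b, sum_powerset_insert (by simpa using hab),
    sum_powerset_insert (notMem_empty b), sum_powerset_insert (notMem_empty b)] at hrec
  simp [hab, inf_eq_right.mpr hbx, inf_eq_right.mpr (inf_le_of_left_le hax)] at hrec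
  linarith

end IsUngarExp

end Ungarian

structure IsDihedralCambrian {L : Type*} [PartialOrder L] [BoundedOrder L]
    (m : ℕ) (α : Fin (m + 1) → L) (t : L) : Prop where
  le_iff_le : ∀ k l, α k ≤ α l ↔ k ≤ l
  zero : α 0 = ⊥
  last : α (Fin.last m) = ⊤
  le_iff_eq_top : ∀ k, t ≤ α k ↔ α k = ⊤
  le_iff_eq_bot : ∀ k, α k ≤ t ↔ α k = ⊥
  ne : ∀ k, t ≠ α k
  eq_or_exists : ∀ x, x = t ∨ ∃ k, x = α k

namespace IsDihedralCambrian

variable {L : Type*} {m : ℕ} {t : L}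

section PartialOrder

variable [PartialOrder L] [BoundedOrder L] {α : Fin (m + 1) → L} (h : IsDihedralCambrian m α t)
include h

lemma lt_iff_lt {k l : Fin (m + 1)} : α k < α l ↔ k < l := by
  simp only [lt_iff_le_not_ge, h.le_iff_le]

lemma injective : Function.Injective α :=
  fun k l hkl => le_antisymm ((h.le_iff_le k l).1 hkl.le) ((h.le_iff_le l k).1 hkl.ge)

lemma eq_bot_iff {k : Fin (m + 1)} : α k = ⊥ ↔ k = 0 := by
  rw [← h.zero, h.injective.eq_iff]

lemma eq_top_iff {k : Fin (m + 1)} : α k = ⊤ ↔ k = Fin.last m := by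
  rw [← h.last, h.injective.eq_iff]

lemma isAtom_t : IsAtom t := by
  refine ⟨h.zero ▸ h.ne 0, fun z hz => ?_⟩
  rcases h.eq_or_exists z with rfl | ⟨k, rfl⟩
  · exact absurd hz (lt_irrefl _)
  · exact (h.le_iff_eq_bot k).1 hz.le

lemma isCoatom_t : IsCoatom t := by
  refine ⟨h.last ▸ h.ne _, fun z hz => ?_⟩
  rcases h.eq_or_exists z with rfl | ⟨k, rfl⟩
  · exact absurd hz (lt_irrefl _)
  · exact (h.le_iff_eq_top k).1 hz.le

/-- The only element off the chain, `t`, lies strictly between `α 0` and `α m` and nowhere else,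
and for `m ≥ 2` these two are not adjacent in the chain. -/
lemma α_covBy_α_iff (hm : 2 ≤ m) {j k : Fin (m + 1)} : α j ⋖ α k ↔ j ⋖ k := by
  refine ⟨fun ⟨hjk, hno⟩ => ⟨h.lt_iff_lt.1 hjk, fun c hjc hck => hno (h.lt_iff_lt.2 hjc)
    (h.lt_iff_lt.2 hck)⟩, fun ⟨hjk, hno⟩ => ⟨h.lt_iff_lt.2 hjk, fun z hjz hzk => ?_⟩⟩
  rcases h.eq_or_exists z with rfl | ⟨c, rfl⟩
  · obtain rfl : j = 0 := h.eq_bot_iff.1 ((h.le_iff_eq_bot j).1 hjz.le)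
    obtain rfl : k = Fin.last m := h.eq_top_iff.1 ((h.le_iff_eq_top k).1 hzk.le)
    exact hno (c := ⟨1, by omega⟩) (by simp [Fin.lt_def]) (by simp [Fin.lt_def]; omega)
  · exact hno (h.lt_iff_lt.1 hjz) (h.lt_iff_lt.1 hzk)

variable [Fintype L]

lemma ungarCov_t : ungarCov t = {⊥} := by
  ext y
  simp only [ungarCov, mem_filter, mem_univ, true_and, mem_singleton]
  exact ⟨fun hy => h.isAtom_t.lt_iff.1 hy.lt, by rintro rfl; exact bot_covBy_iff.2 h.isAtom_t⟩

lemma ungarCov_α (hm : 2 ≤ m) (i : ℕ) (hi : i + 1 < m) :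
    ungarCov (α ⟨i + 1, by omega⟩) = {α ⟨i, by omega⟩} := by
  ext y
  simp only [ungarCov, mem_filter, mem_univ, true_and, mem_singleton]
  refine ⟨fun hy => ?_, by rintro rfl; simp [h.α_covBy_α_iff hm]⟩
  rcases h.eq_or_exists y with rfl | ⟨j, rfl⟩
  · have := h.eq_top_iff.1 ((h.le_iff_eq_top _).1 hy.le)
    simp [Fin.ext_iff] at this
    omega
  · simp only [h.α_covBy_α_iff hm, Fin.covBy_iff, Nat.covBy_iff_add_one_eq] at hy
    exact congrArg α (Fin.ext (by simp; omega))

lemma ungarCov_top (hm : 2 ≤ m) : ungarCov ⊤ = {α ⟨m - 1, by omega⟩, t} := by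
  ext y
  simp only [ungarCov, mem_filter, mem_univ, true_and, mem_insert, mem_singleton]
  refine ⟨fun hy => ?_, ?_⟩
  · rcases h.eq_or_exists y with rfl | ⟨j, rfl⟩
    · exact .inr rfl
    · rw [← h.last, h.α_covBy_α_iff hm, Fin.covBy_iff, Nat.covBy_iff_add_one_eq] at hy
      exact .inl (congrArg α (Fin.ext (by simp at hy ⊢; omega)))
  · rintro (rfl | rfl)
    · rw [← h.last, h.α_covBy_α_iff hm, Fin.covBy_iff, Nat.covBy_iff_add_one_eq]
      simp
      omega
    · exact covBy_top_iff.2 h.isCoatom_t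

end PartialOrder

lemma α_inf_t [Lattice L] [BoundedOrder L] {α : Fin (m + 1) → L} (h : IsDihedralCambrian m α t)
    {k : Fin (m + 1)} (hk : k ≠ Fin.last m) : α k ⊓ t = ⊥ := by
  have htk : ¬ t ≤ α k := by rwa [h.le_iff_eq_top, h.eq_top_iff]
  exact disjoint_iff.1 (h.isAtom_t.not_le_iff_disjoint.1 htk).symm

lemma mul_apply_α_of_isUngarExp [Fintype L] [Lattice L] [BoundedOrder L]
    {α : Fin (m + 1) → L} (h : IsDihedralCambrian m α t) (hm : 2 ≤ m) {p : ℝ} {E : L → ℝ}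
    (hE : IsUngarExp p E) : ∀ (i : ℕ) (hi : i < m), p * E (α ⟨i, by omega⟩) = i
  | 0, _ => by simp [h.zero, hE.1]
  | i + 1, hi => by
    have hne : α ⟨i + 1, by omega⟩ ≠ ⊥ := by simp [h.eq_bot_iff, Fin.ext_iff]
    rw [hE.mul_eq_of_ungarCov_eq_singleton hne (h.ungarCov_α hm i hi),
      h.mul_apply_α_of_isUngarExp hm hE i (by omega)]
    push_cast
    ring

end IsDihedralCambrian

/-- For a Coxeter element `c` of the dihedral group `I₂(m)` (`m ≥ 2`)
and `p ∈ (0,1)`, the expected top-to-bottom absorption time of the Ungarian Markov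
chain on the `c`-Cambrian lattice (two chains `e ⋖ α₁ ⋖ ⋯ ⋖ α_m` and `e ⋖ t ⋖ α_m`)
equals `(1 + m(1-p)) / (2p - p²)`. The lattice is specified up to isomorphism by the
hypotheses below (with `α 0 = e = ⊥` and `α m = ⊤`). -/
theorem stmt_5 {L : Type*} [Fintype L] [Lattice L] [BoundedOrder L]
    (m : ℕ) (hm : 2 ≤ m) (α : Fin (m + 1) → L) (t : L)
    (hα : ∀ k l : Fin (m + 1), α k ≤ α l ↔ k ≤ l)
    (hbot : α 0 = ⊥) (htop : α (Fin.last m) = ⊤)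
    (htα : ∀ k : Fin (m + 1), t ≤ α k ↔ α k = ⊤)
    (hαt : ∀ k : Fin (m + 1), α k ≤ t ↔ α k = ⊥)
    (htne : ∀ k : Fin (m + 1), t ≠ α k)
    (hall : ∀ x : L, x = t ∨ ∃ k : Fin (m + 1), x = α k)
    (p : ℝ) (hp : 0 < p) (hp1 : p < 1)
    (E : L → ℝ) (hE : IsUngarExp p E) :
    E ⊤ = (1 + m * (1 - p)) / (2 * p - p ^ 2) := by
  have hL : IsDihedralCambrian m α t := ⟨hα, hbot, htop, htα, hαt, htne, hall⟩
  have hEt : p * E t = 1 := by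
    simpa [hE.1] using hE.mul_eq_of_ungarCov_eq_singleton hL.isAtom_t.ne_bot hL.ungarCov_t
  have hEα : p * E (α ⟨m - 1, by omega⟩) = m - 1 := by
    rw [hL.mul_apply_α_of_isUngarExp hm hE (m - 1) (by omega), Nat.cast_pred (by omega)]
  have hEtop := hE.eq_of_ungarCov_eq_pair (ne_bot_of_le_ne_bot hL.isAtom_t.ne_bot le_top)
    (htne _).symm (hL.ungarCov_top hm)
  rw [hL.α_inf_t (by simp [Fin.ext_iff]; omega), hE.1] at hEtop
  rw [eq_div_iff (by nlinarith)]
  linear_combination hEtop + (1 - p) * hEα + (1 - p) * hEt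
end

section
/- Let $L$ be a finite trim lattice and let $x \in \mathrm{spine}(L)$. Then the interval $[\hat{0}, x]$ of $L$ is a trim lattice whose spine equals $\mathrm{spine}(L) \cap [\hat{0}, x]$. -/
open Finset
open scoped Classical

/-- The maximum cardinality of a chain in a finite preorder. -/
noncomputable def maxChainCard (L : Type*) [Fintype L] [Preorder L] : ℕ :=
  Finset.sup (Finset.univ.powerset.filter
    (fun C : Finset L => IsChain (· ≤ ·) (C : Set L))) Finset.card

/-- The number of join-irreducible elements (elements covering exactly one element). -/
noncomputable def numJoinIrred (L : Type*) [Fintype L] [Preorder L] : ℕ :=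
  (Finset.univ.filter
    (fun a : L => (Finset.univ.filter (fun y : L => y ⋖ a)).card = 1)).card

/-- The number of meet-irreducible elements (elements covered by exactly one element). -/
noncomputable def numMeetIrred (L : Type*) [Fintype L] [Preorder L] : ℕ :=
  (Finset.univ.filter
    (fun a : L => (Finset.univ.filter (fun y : L => a ⋖ y)).card = 1)).card

/-- `x` is a left modular element of the lattice `L`. -/
def IsLeftModular {L : Type*} [Lattice L] (x : L) : Prop :=
  ∀ y z : L, y ≤ z → (y ⊔ x) ⊓ z = y ⊔ (x ⊓ z)

/-- A finite lattice is trim if it is extremal (its length equals its number of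
join-irreducibles and its number of meet-irreducibles) and left modular (it has a
maximal chain all of whose elements are left modular). -/
def IsTrim (L : Type*) [Fintype L] [Lattice L] : Prop :=
  (maxChainCard L - 1 = numJoinIrred L ∧ maxChainCard L - 1 = numMeetIrred L) ∧
  ∃ C : Finset L, IsChain (· ≤ ·) (C : Set L) ∧
    (∀ D : Finset L, IsChain (· ≤ ·) (D : Set L) → C ⊆ D → D = C) ∧
    ∀ x ∈ C, IsLeftModular x

/-- The spine of a finite lattice: the set of elements lying on at least one
maximum-length chain. -/
noncomputable def spineF (L : Type*) [Fintype L] [Preorder L] : Finset L :=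
  Finset.univ.filter (fun x : L => ∃ C : Finset L,
    IsChain (· ≤ ·) (C : Set L) ∧ C.card = maxChainCard L ∧ x ∈ C)

/-!
Fix a maximum chain `⊥ = c₀ ⋖ c₁ ⋖ ⋯ ⋖ cₙ = ⊤` of `L`. Every step `cᵢ < cᵢ₊₁` is witnessed by a
join-irreducible `jᵢ ≤ cᵢ₊₁` with `jᵢ ≰ cᵢ`; these are pairwise distinct, and since `L` has exactly
`n` join-irreducibles they are all of them. Meeting the chain with `x` therefore gives a chain in
`[⊥, x]` that strictly increases at every `i` with `jᵢ ≤ x`, while a chain below `x` can never be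
longer than the number `J(x)` of join-irreducibles below `x`. So `[⊥, x]` has length `J(x)`,
which is also its number of join-irreducibles.

Dually `[x, ⊤]` has length at most the number `M(x)` of meet-irreducibles above `x`, and as `x`
lies on the spine the lengths of `[⊥, x]` and `[x, ⊤]` add up to `n`, so `J(x) + M(x) ≥ n`. Each
meet-irreducible of `[⊥, x]` is `m ⊓ x` for a meet-irreducible `m ≱ x` of `L`, so `[⊥, x]` has at
most `n - M(x) ≤ J(x)` meet-irreducibles, and it has at least as many as its length. Left
modularity of `w ⋖ w'` forces `w ⊓ x ⩿ w' ⊓ x`, so meeting a left modular maximal chain with `x`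
gives one of `[⊥, x]`.

For the spines: a maximum chain of `[⊥, x]` followed by a maximum chain of `[x, ⊤]` has length
`n`, and a maximum chain of `L` through `z ≤ x`, met with `x`, is a maximum chain of `[⊥, x]`
through `z`.
-/

open OrderDual

theorem exists_map_subtype_eq {α : Type*} {s : Set α} {C : Finset α} (hCs : ↑C ⊆ s) :
    ∃ D : Finset s, D.map (Function.Embedding.subtype (· ∈ s)) = C :=
  ⟨C.subtype (· ∈ s), subtype_map_of_mem fun _ hc => hCs hc⟩

section Chains

variable {α : Type*} [PartialOrder α]

theorem isChain_map_subtype {s : Set α} {D : Finset s} :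
    IsChain (· ≤ ·) (↑(D.map (Function.Embedding.subtype (· ∈ s))) : Set α) ↔
      IsChain (· ≤ ·) (D : Set s) := by
  rw [coe_map]
  exact IsChain.image_embedding_iff (φ := OrderEmbedding.subtype (· ∈ s))

theorem IsChain.exists_strictMono_fin {C : Finset α} (hC : IsChain (· ≤ ·) (C : Set α)) {k : ℕ}
    (hk : C.card = k) : ∃ f : Fin k → α, StrictMono f ∧ univ.image f = C := by
  let := hC.linearOrder
  let e := (univ : Finset (C : Set α)).orderEmbOfFin (by simpa using hk)
  refine ⟨Subtype.val ∘ e, Subtype.strictMono_coe _ |>.comp e.strictMono, ?_⟩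
  rw [← coe_inj, coe_image, coe_univ, Set.image_univ, Set.range_comp, range_orderEmbOfFin]
  simp

theorem isMaxChain_coe_iff [Finite α] {C : Finset α} :
    IsMaxChain (· ≤ ·) (C : Set α) ↔ IsChain (· ≤ ·) (C : Set α) ∧
      ∀ D : Finset α, IsChain (· ≤ ·) (D : Set α) → C ⊆ D → D = C := by
  refine ⟨fun h => ⟨h.1, fun D hD hCD => (coe_inj.1 (h.2 hD (coe_subset.2 hCD))).symm⟩,
    fun h => ⟨h.1, fun t ht hCt => ?_⟩⟩
  obtain ⟨D, rfl⟩ := (Set.toFinite t).exists_finset_coe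
  rw [h.2 D ht (coe_subset.1 hCt)]

theorem IsMaxChain.covBy_of_range_fin {n : ℕ} {f : Fin (n + 1) → α} (hf : StrictMono f)
    (hmax : IsMaxChain (· ≤ ·) (Set.range f)) (i : Fin n) : f i.castSucc ⋖ f i.succ := by
  refine ⟨hf i.castSucc_lt_succ, fun z h1 h2 => ?_⟩
  have hchain : IsChain (· ≤ ·) (insert z (Set.range f)) := hmax.1.insert fun b hb _ => by
    obtain ⟨k, rfl⟩ := hb
    rcases le_or_gt k i.castSucc with hk | hk
    · exact Or.inr ((hf.monotone hk).trans h1.le)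
    · exact Or.inl (h2.le.trans (hf.monotone (Fin.castSucc_lt_iff_succ_le.1 hk)))
  obtain ⟨k, rfl⟩ : z ∈ Set.range f := hmax.2 hchain (Set.subset_insert _ _) ▸ Set.mem_insert _ _
  exact (hf.lt_iff_lt.1 h2).not_ge (Fin.castSucc_lt_iff_succ_le.1 (hf.lt_iff_lt.1 h1))

theorem Monotone.card_add_one_le_card_image {n : ℕ} {g : Fin (n + 1) → α} (hg : Monotone g)
    {W : Finset (Fin n)} (hW : ∀ i ∈ W, g i.castSucc < g i.succ) :
    W.card + 1 ≤ (univ.image g).card := by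
  have hstrict : StrictMonoOn g ↑(insert 0 (W.map (Fin.succEmb n))) := by
    intro a _ b hb hab
    obtain rfl | ⟨i, hi, rfl⟩ : b = 0 ∨ ∃ i ∈ W, i.succ = b := by simpa using hb
    · exact absurd hab (Fin.not_lt_zero a)
    · exact (hg (Fin.le_castSucc_iff.2 hab)).trans_lt (hW i hi)
  calc W.card + 1 = (insert 0 (W.map (Fin.succEmb n))).card := by
        rw [card_insert_of_notMem (by simp [Fin.succ_ne_zero]), card_map]
    _ ≤ _ := card_le_card_of_injOn g (fun a _ => by simp) hstrict.injOn

theorem IsChain.card_le_of_strictMonoOn {C : Finset α} (hC : IsChain (· ≤ ·) (C : Set α))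
    {f : α → ℕ} (hf : StrictMonoOn f C) {N : ℕ} (hN : ∀ c ∈ C, f c ≤ N) : C.card ≤ N + 1 := by
  have hinj : Set.InjOn f C := fun a ha b hb hab => by
    by_contra hne
    rcases hC ha hb hne with h | h
    · exact (hf ha hb (h.lt_of_ne hne)).ne hab
    · exact (hf hb ha (h.lt_of_ne' hne)).ne' hab
  simpa using card_le_card_of_injOn (t := range (N + 1)) f
    (fun c hc => mem_range.2 (Nat.lt_succ_of_le (hN c hc))) hinj

end Chains

section MaxChainCardIn

variable {α : Type*} [Fintype α] [PartialOrder α]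

noncomputable def maxChainCardIn (s : Set α) : ℕ :=
  (univ.powerset.filter fun C : Finset α => IsChain (· ≤ ·) (C : Set α) ∧ ↑C ⊆ s).sup card

theorem card_le_maxChainCardIn {s : Set α} {C : Finset α} (hC : IsChain (· ≤ ·) (C : Set α))
    (hCs : ↑C ⊆ s) : C.card ≤ maxChainCardIn s :=
  le_sup (by simp [hC, hCs])

theorem exists_isChain_card_eq_maxChainCardIn (s : Set α) :
    ∃ C : Finset α, IsChain (· ≤ ·) (C : Set α) ∧ ↑C ⊆ s ∧ C.card = maxChainCardIn s := by
  have hempty : ∅ ∈ univ.powerset.filter fun C : Finset α =>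
      IsChain (· ≤ ·) (C : Set α) ∧ ↑C ⊆ s := by simp
  obtain ⟨C, hC, hcard⟩ := exists_mem_eq_sup _ ⟨_, hempty⟩ card
  simp only [mem_filter, mem_powerset] at hC
  exact ⟨C, hC.2.1, hC.2.2, hcard.symm⟩

theorem maxChainCardIn_univ : maxChainCardIn (Set.univ : Set α) = maxChainCard α := by
  simp [maxChainCardIn, maxChainCard]

theorem le_maxChainCard {C : Finset α} (hC : IsChain (· ≤ ·) (C : Set α)) :
    C.card ≤ maxChainCard α :=
  maxChainCardIn_univ (α := α) ▸ card_le_maxChainCardIn hC (Set.subset_univ _)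

theorem mem_spineF_iff {a : α} :
    a ∈ spineF α ↔
      ∃ C : Finset α, IsChain (· ≤ ·) (C : Set α) ∧ C.card = maxChainCard α ∧ a ∈ C := by
  simp [spineF]

theorem mem_spineF_of_le_card {C : Finset α} (hC : IsChain (· ≤ ·) (C : Set α))
    (hcard : maxChainCard α ≤ C.card) {a : α} (ha : a ∈ C) : a ∈ spineF α :=
  mem_spineF_iff.2 ⟨C, hC, (le_maxChainCard hC).antisymm hcard, ha⟩

theorem maxChainCard_subtype (s : Set α) [Fintype s] : maxChainCard s = maxChainCardIn s := by
  refine le_antisymm (Finset.sup_le fun D hD => ?_) ?_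
  · rw [← card_map (Function.Embedding.subtype (· ∈ s))]
    exact card_le_maxChainCardIn (isChain_map_subtype.2 (mem_filter.1 hD).2) (by simp)
  · obtain ⟨C, hC, hCs, hcard⟩ := exists_isChain_card_eq_maxChainCardIn s
    obtain ⟨D, rfl⟩ := exists_map_subtype_eq hCs
    rw [← hcard, card_map]
    exact le_maxChainCard (isChain_map_subtype.1 hC)

theorem mem_spineF_subtype_iff {s : Set α} [Fintype s] {a : s} :
    a ∈ spineF s ↔ ∃ C : Finset α, IsChain (· ≤ ·) (C : Set α) ∧ ↑C ⊆ s ∧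
      C.card = maxChainCardIn s ∧ ↑a ∈ C := by
  rw [mem_spineF_iff, maxChainCard_subtype]
  constructor
  · rintro ⟨D, hD, hcard, haD⟩
    exact ⟨_, isChain_map_subtype.2 hD, by simp, by rwa [card_map],
      mem_map_of_mem _ haD⟩
  · rintro ⟨C, hC, hCs, hcard, haC⟩
    obtain ⟨D, rfl⟩ := exists_map_subtype_eq hCs
    exact ⟨D, isChain_map_subtype.1 hC, by rwa [card_map] at hcard,
      (mem_map' _).1 haC⟩

theorem maxChainCard_add_one_le_of_mem_spineF {z : α} (hz : z ∈ spineF α) :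
    maxChainCard α + 1 ≤ maxChainCardIn (Set.Iic z) + maxChainCardIn (Set.Ici z) := by
  obtain ⟨D, hD, hcard, hzD⟩ := mem_spineF_iff.1 hz
  set D₁ := D.filter (· ≤ z)
  set D₂ := D.filter (z ≤ ·)
  have hcover : D ⊆ D₁ ∪ D₂ := fun d hd => by
    rcases hD.total hd hzD with h | h <;> simp [D₁, D₂, hd, h]
  have hzmem : z ∈ D₁ ∩ D₂ := by simp [D₁, D₂, hzD]
  calc maxChainCard α + 1 ≤ (D₁ ∪ D₂).card + (D₁ ∩ D₂).card :=
        hcard ▸ add_le_add (card_le_card hcover) (card_pos.2 ⟨z, hzmem⟩)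
    _ = D₁.card + D₂.card := card_union_add_card_inter _ _
    _ ≤ _ := add_le_add
        (card_le_maxChainCardIn (hD.mono (coe_subset.2 (filter_subset _ _)))
          fun _ h => (mem_filter.1 h).2)
        (card_le_maxChainCardIn (hD.mono (coe_subset.2 (filter_subset _ _)))
          fun _ h => (mem_filter.1 h).2)

theorem IsChain.exists_superset_card_add_maxChainCardIn_Ici_le {C : Finset α}
    (hC : IsChain (· ≤ ·) (C : Set α)) {x : α} (hCx : ∀ c ∈ C, c ≤ x) :
    ∃ D : Finset α, IsChain (· ≤ ·) (D : Set α) ∧ C ⊆ D ∧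
      C.card + maxChainCardIn (Set.Ici x) ≤ D.card + 1 := by
  obtain ⟨E, hE, hEx, hcard⟩ := exists_isChain_card_eq_maxChainCardIn (Set.Ici x)
  refine ⟨C ∪ E, ?_, subset_union_left, ?_⟩
  · rw [coe_union, isChain_union]
    exact ⟨hC, hE, fun c hc e he _ => Or.inl ((hCx c hc).trans (hEx he))⟩
  · have hinter : (C ∩ E).card ≤ 1 := card_le_one.2 fun a ha b hb => by
      simp only [mem_inter] at ha hb
      exact ((hCx a ha.1).trans (hEx hb.2)).antisymm ((hCx b hb.1).trans (hEx ha.2))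
    have := card_union_add_card_inter C E
    omega

end MaxChainCardIn

section Irreducible

variable {L : Type*} [Lattice L]

theorem existsUnique_covBy_iff_supIrred [Finite L] {a : L} : (∃! b, b ⋖ a) ↔ SupIrred a := by
  constructor
  · rintro ⟨b, hba, hb⟩
    have below : ∀ u, u < a → u ≤ b := fun u hu => by
      obtain ⟨c, huc, hca⟩ := exists_le_covBy_of_lt hu
      exact hb c hca ▸ huc
    refine ⟨not_isMin_of_lt hba.lt, fun u v huv => ?_⟩
    by_contra! h
    have hu : u < a := (huv ▸ le_sup_left).lt_of_ne h.1
    have hv : v < a := (huv ▸ le_sup_right).lt_of_ne h.2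
    exact hba.lt.not_ge (huv ▸ sup_le (below u hu) (below v hv))
  · intro ha
    obtain ⟨u, hu⟩ := not_isMin_iff.1 ha.1
    obtain ⟨b, -, hb⟩ := exists_le_covBy_of_lt hu
    refine ⟨b, hb, fun c hc => ?_⟩
    by_contra hcb
    have hsup : b ⊔ c = a := by
      refine (hb.eq_or_eq le_sup_left (sup_le hb.le hc.le)).resolve_left fun h => ?_
      rcases hc.eq_or_eq (h ▸ le_sup_right) hb.le with h' | h'
      · exact hcb h'.symm
      · exact hb.ne h'
    rcases ha.2 hsup with h | h
    · exact hb.ne h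
    · exact hc.ne h

theorem existsUnique_covBy_iff_infIrred [Finite L] {a : L} : (∃! b, a ⋖ b) ↔ InfIrred a := by
  rw [← supIrred_toDual, ← existsUnique_covBy_iff_supIrred]
  exact toDual.existsUnique_congr fun b => toDual_covBy_toDual_iff.symm

theorem numJoinIrred_eq_card_supIrred [Fintype L] : numJoinIrred L = #{a : L | SupIrred a} := by
  unfold numJoinIrred
  congr 1
  exact filter_congr fun a _ => by
    rw [← Fintype.existsUnique_iff_card_one, existsUnique_covBy_iff_supIrred]

theorem numMeetIrred_eq_card_infIrred [Fintype L] : numMeetIrred L = #{a : L | InfIrred a} := by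
  unfold numMeetIrred
  congr 1
  exact filter_congr fun a _ => by
    rw [← Fintype.existsUnique_iff_card_one, existsUnique_covBy_iff_infIrred]

theorem exists_supIrred_le_not_le [Finite L] [OrderBot L] {a b : L} (h : ¬ a ≤ b) :
    ∃ j, SupIrred j ∧ j ≤ a ∧ ¬ j ≤ b := by
  obtain ⟨s, hs, hirr⟩ := exists_supIrred_decomposition a
  by_contra! H
  exact h (hs ▸ Finset.sup_le fun j hj => H j (hirr hj) (hs ▸ le_sup (f := id) hj))

theorem exists_infIrred_le_not_le [Finite L] [OrderTop L] {a b : L} (h : ¬ a ≤ b) :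
    ∃ m, InfIrred m ∧ b ≤ m ∧ ¬ a ≤ m := by
  obtain ⟨j, hj, hjb, hja⟩ := exists_supIrred_le_not_le (a := toDual b) (b := toDual a) (by simpa)
  exact ⟨ofDual j, infIrred_ofDual.2 hj, hjb, hja⟩

theorem IsChain.image_inf {C : Finset L} (hC : IsChain (· ≤ ·) (C : Set L)) (x : L) :
    IsChain (· ≤ ·) (↑(C.image (· ⊓ x)) : Set L) := by
  rw [coe_image]
  exact Monotone.isChain_image (fun _ _ h => inf_le_inf_right x h) hC

variable [Fintype L]

theorem IsChain.card_le_card_supIrred_add_one [OrderBot L] {C : Finset L}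
    (hC : IsChain (· ≤ ·) (C : Set L)) {x : L} (hCx : ∀ c ∈ C, c ≤ x) :
    C.card ≤ #{j | SupIrred j ∧ j ≤ x} + 1 := by
  refine hC.card_le_of_strictMonoOn (f := fun c => #{j | SupIrred j ∧ j ≤ c})
    (fun a _ b _ hab => card_lt_card ?_) fun c hc => card_le_card fun j => ?_
  · obtain ⟨j, hj, hjb, hja⟩ := exists_supIrred_le_not_le hab.not_ge
    refine (ssubset_iff_of_subset fun i => ?_).2 ⟨j, by simp [hj, hjb], by simp [hja]⟩
    simpa using fun hi hia => ⟨hi, hia.trans hab.le⟩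
  · simpa using fun hj hjc => ⟨hj, hjc.trans (hCx c hc)⟩

theorem IsChain.card_le_card_infIrred_add_one [OrderTop L] {C : Finset L}
    (hC : IsChain (· ≤ ·) (C : Set L)) {y : L} (hCy : ∀ c ∈ C, y ≤ c) :
    C.card ≤ #{m | InfIrred m ∧ y ≤ m} + 1 := by
  refine hC.card_le_of_strictMonoOn (f := fun c => #{m | InfIrred m ∧ y ≤ m ∧ ¬ c ≤ m})
    (fun a ha b _ hab => card_lt_card ?_) fun c _ => card_le_card fun m => ?_
  · obtain ⟨m, hm, ham, hbm⟩ := exists_infIrred_le_not_le hab.not_ge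
    refine (ssubset_iff_of_subset fun i => ?_).2
      ⟨m, by simp [hm, (hCy a ha).trans ham, hbm], by simp [ham]⟩
    simpa using fun hi hyi hai => ⟨hi, hyi, fun hbi => hai (hab.le.trans hbi)⟩
  · simpa using fun hm hym _ => ⟨hm, hym⟩

theorem maxChainCardIn_Ici_le [OrderTop L] (y : L) :
    maxChainCardIn (Set.Ici y) ≤ #{m | InfIrred m ∧ y ≤ m} + 1 := by
  obtain ⟨C, hC, hCy, hcard⟩ := exists_isChain_card_eq_maxChainCardIn (Set.Ici y)
  exact hcard ▸ hC.card_le_card_infIrred_add_one fun c hc => hCy hc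

theorem maxChainCard_le_numMeetIrred_add_one [BoundedOrder L] :
    maxChainCard L ≤ numMeetIrred L + 1 := by
  simpa [← maxChainCardIn_univ, ← Set.Ici_bot, numMeetIrred_eq_card_infIrred] using
    maxChainCardIn_Ici_le (⊥ : L)

theorem exists_supIrred_labels [OrderBot L] {n : ℕ} {c : Fin (n + 1) → L} (hc : StrictMono c)
    (hn : #{j : L | SupIrred j} = n) :
    ∃ g : Fin n → L, (∀ i, g i ≤ c i.succ ∧ ¬ g i ≤ c i.castSucc) ∧
      ∀ j, SupIrred j → ∃ i, g i = j := by
  choose g hg using fun i : Fin n => exists_supIrred_le_not_le (hc i.castSucc_lt_succ).not_ge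
  have hlt : ∀ i i', i < i' → g i ≠ g i' := fun i i' h he =>
    (hg i').2.2 (he ▸ (hg i).2.1.trans (hc.monotone (Fin.castSucc_lt_iff_succ_le.1 h)))
  have hinj : g.Injective := fun i i' he => by
    by_contra hne
    rcases lt_or_gt_of_ne hne with h | h
    · exact hlt i i' h he
    · exact hlt i' i h he.symm
  have himage : univ.image g = ({j | SupIrred j} : Finset L) := by
    refine eq_of_subset_of_card_le (fun j hj => ?_) ?_
    · obtain ⟨i, -, rfl⟩ := mem_image.1 hj
      simp [(hg i).1]
    · rw [card_image_of_injective _ hinj, hn, card_univ, Fintype.card_fin]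
  refine ⟨g, fun i => (hg i).2, fun j hj => ?_⟩
  obtain ⟨i, -, hi⟩ := mem_image.1 (himage ▸ mem_filter.2 ⟨mem_univ j, hj⟩)
  exact ⟨i, hi⟩

theorem card_supIrred_le_add_one_le_card_image_inf [OrderBot L]
    (hN : maxChainCard L = #{j : L | SupIrred j} + 1) {C : Finset L}
    (hC : IsChain (· ≤ ·) (C : Set L)) (hcard : C.card = maxChainCard L) (x : L) :
    #{j | SupIrred j ∧ j ≤ x} + 1 ≤ (C.image (· ⊓ x)).card := by
  obtain ⟨c, hc, rfl⟩ := hC.exists_strictMono_fin (hcard.trans hN)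
  obtain ⟨g, hg, hsurj⟩ := exists_supIrred_labels hc rfl
  have hsteps : ∀ i ∈ univ.filter (g · ≤ x), c i.castSucc ⊓ x < c i.succ ⊓ x := by
    intro i hi
    refine lt_of_le_not_ge (inf_le_inf_right x (hc i.castSucc_lt_succ).le) fun h => ?_
    exact (hg i).2 ((le_inf (hg i).1 (mem_filter.1 hi).2).trans (h.trans inf_le_left))
  calc #{j | SupIrred j ∧ j ≤ x} + 1 ≤ (univ.filter (g · ≤ x)).card + 1 := by
        gcongr
        refine card_le_card_of_surjOn g fun j hj => ?_
        simp only [coe_filter, Set.mem_ofPred_eq, mem_univ, true_and] at hj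
        obtain ⟨i, rfl⟩ := hsurj j hj.1
        exact ⟨i, by simpa using hj.2, rfl⟩
    _ ≤ (univ.image fun k => c k ⊓ x).card :=
        Monotone.card_add_one_le_card_image (fun _ _ h => inf_le_inf_right x (hc.monotone h)) hsteps
    _ = ((univ.image c).image (· ⊓ x)).card := by rw [image_image]; rfl

theorem maxChainCardIn_Iic_eq [OrderBot L] (hN : maxChainCard L = #{j : L | SupIrred j} + 1)
    (x : L) : maxChainCardIn (Set.Iic x) = #{j | SupIrred j ∧ j ≤ x} + 1 := by
  refine le_antisymm ?_ ?_
  · obtain ⟨C, hC, hCx, hcard⟩ := exists_isChain_card_eq_maxChainCardIn (Set.Iic x)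
    exact hcard ▸ hC.card_le_card_supIrred_add_one fun c hc => hCx hc
  · obtain ⟨C, hC, -, hcard⟩ := exists_isChain_card_eq_maxChainCardIn (Set.univ : Set L)
    rw [maxChainCardIn_univ] at hcard
    exact (card_supIrred_le_add_one_le_card_image_inf hN hC hcard x).trans
      (card_le_maxChainCardIn (hC.image_inf x) (by simp [Set.subset_def]))

end Irreducible

section LeftModular

variable {L : Type*} [Lattice L]

theorem IsLeftModular.wcovBy_inf {w w' : L} (hw : IsLeftModular w) (hcov : w ⋖ w') (x : L) :
    w ⊓ x ⩿ w' ⊓ x := by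
  refine ⟨inf_le_inf_right x hcov.le, fun t h1 h2 => ?_⟩
  have htw : ¬ t ≤ w := fun h => h1.not_ge (le_inf h (h2.le.trans inf_le_right))
  have hsup : t ⊔ w = w' :=
    (hcov.eq_or_eq le_sup_right (sup_le (h2.le.trans inf_le_left) hcov.le)).resolve_left
      fun h => htw (h ▸ le_sup_left)
  have hmod := hw t (w' ⊓ x) h2.le
  rw [hsup, inf_of_le_right inf_le_left, ← inf_assoc, inf_of_le_left hcov.le,
    sup_of_le_left h1.le] at hmod
  exact h2.ne hmod.symm

end LeftModular

section Interval

variable {L : Type*} [Lattice L] [BoundedOrder L] {x : L}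

instance fact_bot_le : Fact ((⊥ : L) ≤ x) := ⟨bot_le⟩

theorem supIrred_Icc_bot_iff {a : Set.Icc (⊥ : L) x} : SupIrred a ↔ SupIrred (a : L) := by
  have hmin : IsMin a ↔ IsMin (a : L) := by
    rw [isMin_iff_eq_bot, isMin_iff_eq_bot, ← Subtype.coe_inj, Set.Icc.coe_bot]
  refine and_congr (not_congr hmin) ⟨fun h b c hbc => ?_, fun h b c hbc => ?_⟩
  · have hb : b ∈ Set.Icc ⊥ x := ⟨bot_le, (hbc ▸ le_sup_left).trans a.2.2⟩
    have hc : c ∈ Set.Icc ⊥ x := ⟨bot_le, (hbc ▸ le_sup_right).trans a.2.2⟩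
    simpa [← Subtype.coe_inj] using @h ⟨b, hb⟩ ⟨c, hc⟩ (Subtype.ext hbc)
  · simpa [← Subtype.coe_inj] using @h b c (by rw [← Set.Icc.coe_sup, hbc])

theorem IsLeftModular.inf_Icc_bot {w : L} (hw : IsLeftModular w) :
    IsLeftModular (⟨w ⊓ x, bot_le, inf_le_right⟩ : Set.Icc (⊥ : L) x) := by
  intro y z hyz
  apply Subtype.ext
  simp only [Set.Icc.coe_sup, Set.Icc.coe_inf]
  have hzx : (z : L) ≤ x := z.2.2
  rw [inf_assoc, inf_of_le_right hzx]
  refine le_antisymm ?_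
    (le_inf (sup_le_sup_left (inf_le_inf_left w hzx) _) (sup_le hyz inf_le_right))
  calc ((y : L) ⊔ w ⊓ x) ⊓ (z : L) ≤ ((y : L) ⊔ w) ⊓ (z : L) :=
        inf_le_inf_right _ (sup_le_sup_left inf_le_left _)
    _ = (y : L) ⊔ w ⊓ (z : L) := hw _ _ hyz

variable [Fintype L]

theorem card_supIrred_Icc_bot [Fintype (Set.Icc (⊥ : L) x)] :
    #{a : Set.Icc (⊥ : L) x | SupIrred a} = #{j : L | SupIrred j ∧ j ≤ x} := by
  refine card_bij (fun a _ => a.1) (fun a ha => ?_) (fun _ _ _ _ => Subtype.ext)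
    fun j hj => ?_
  · simpa [supIrred_Icc_bot_iff.1 (mem_filter.1 ha).2] using a.2.2
  · simp only [mem_filter, mem_univ, true_and] at hj
    exact ⟨⟨j, bot_le, hj.2⟩, by simpa [supIrred_Icc_bot_iff] using hj.1, rfl⟩

theorem InfIrred.exists_infIrred_inf_eq {a : Set.Icc (⊥ : L) x} (ha : InfIrred a) :
    ∃ m : L, InfIrred m ∧ ¬ x ≤ m ∧ m ⊓ x = a := by
  obtain ⟨a', haa', huniq⟩ := existsUnique_covBy_iff_infIrred.2 ha
  have above : ∀ t, a < t → a' ≤ t := fun t ht => by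
    obtain ⟨s, has, hst⟩ := exists_covBy_le_of_lt ht
    exact huniq s has ▸ hst
  obtain ⟨m, hm, ham, ha'm⟩ := exists_infIrred_le_not_le (a := (a' : L)) (b := a) haa'.lt.not_ge
  refine ⟨m, hm, fun hxm => ha'm (a'.2.2.trans hxm), le_antisymm ?_ (le_inf ham a.2.2)⟩
  by_contra h
  have : (a' : L) ≤ m ⊓ x :=
    above ⟨m ⊓ x, bot_le, inf_le_right⟩ (lt_of_le_not_ge (le_inf ham a.2.2) h)
  exact ha'm (this.trans inf_le_left)

theorem card_infIrred_Icc_bot_le [Fintype (Set.Icc (⊥ : L) x)] :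
    #{a : Set.Icc (⊥ : L) x | InfIrred a} ≤ #{m : L | InfIrred m ∧ ¬ x ≤ m} := by
  refine card_le_card_of_surjOn (fun m => ⟨m ⊓ x, bot_le, inf_le_right⟩) fun a ha => ?_
  obtain ⟨m, hm, hxm, hmx⟩ := (mem_filter.1 ha).2.exists_infIrred_inf_eq
  exact ⟨m, by simp [hm, hxm], Subtype.ext hmx⟩

theorem exists_leftModular_maxChain_Icc_bot [Fintype (Set.Icc (⊥ : L) x)]
    (h : ∃ C : Finset L, IsChain (· ≤ ·) (C : Set L) ∧
      (∀ D : Finset L, IsChain (· ≤ ·) (D : Set L) → C ⊆ D → D = C) ∧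
      ∀ c ∈ C, IsLeftModular c) :
    ∃ C : Finset (Set.Icc (⊥ : L) x), IsChain (· ≤ ·) (C : Set (Set.Icc (⊥ : L) x)) ∧
      (∀ D : Finset (Set.Icc (⊥ : L) x), IsChain (· ≤ ·) (D : Set (Set.Icc (⊥ : L) x)) →
        C ⊆ D → D = C) ∧
      ∀ c ∈ C, IsLeftModular c := by
  obtain ⟨C, hC, hmax, hmod⟩ := h
  have hmax' : IsMaxChain (· ≤ ·) (C : Set L) := isMaxChain_coe_iff.2 ⟨hC, hmax⟩
  obtain ⟨r, hr⟩ := Nat.exists_eq_succ_of_ne_zero (card_ne_zero_of_mem hmax'.bot_mem)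
  obtain ⟨w, hw, rfl⟩ := hC.exists_strictMono_fin hr
  rw [coe_image, coe_univ, Set.image_univ] at hmax'
  have hw0 : w 0 = ⊥ := by
    obtain ⟨k, hk⟩ := hmax'.bot_mem
    exact le_bot_iff.1 (hk ▸ hw.monotone (Fin.zero_le k))
  have hwr : w (Fin.last r) = ⊤ := by
    obtain ⟨k, hk⟩ := hmax'.top_mem
    exact top_le_iff.1 (hk ▸ hw.monotone (Fin.le_last k))
  let f : Fin (r + 1) → Set.Icc (⊥ : L) x := fun i => ⟨w i ⊓ x, bot_le, inf_le_right⟩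
  have hf : IsMaxChain (· ≤ ·) (Set.range f) := by
    refine IsMaxChain.range_fin_of_covBy (Subtype.ext ?_) (Subtype.ext ?_) fun i => ?_
    · simp [f, hw0]
    · simp [f, hwr]
    · have := (hmod _ (mem_image_of_mem _ (mem_univ _))).wcovBy_inf
        (IsMaxChain.covBy_of_range_fin hw hmax' i) x
      exact ⟨this.1, fun c h1 h2 => this.2 h1 h2⟩
  rw [← Set.image_univ, ← coe_univ, ← coe_image] at hf
  refine ⟨univ.image f, (isMaxChain_coe_iff.1 hf).1, (isMaxChain_coe_iff.1 hf).2, fun c hc => ?_⟩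
  obtain ⟨i, -, rfl⟩ := mem_image.1 hc
  exact (hmod _ (mem_image_of_mem _ (mem_univ i))).inf_Icc_bot

end Interval

section Trim

variable {L : Type*} [Fintype L] [Lattice L] [BoundedOrder L]

theorem IsTrim.maxChainCard_eq (hL : IsTrim L) :
    maxChainCard L = #{j : L | SupIrred j} + 1 ∧ maxChainCard L = #{m : L | InfIrred m} + 1 := by
  have hpos : 1 ≤ maxChainCard L := by simpa using le_maxChainCard (C := {(⊥ : L)}) (by simp)
  have h := hL.1
  rw [numJoinIrred_eq_card_supIrred, numMeetIrred_eq_card_infIrred] at h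
  omega

theorem isTrim_Icc_bot {x : L} [Fintype (Set.Icc (⊥ : L) x)] (hL : IsTrim L)
    (hx : x ∈ spineF L) : IsTrim (Set.Icc (⊥ : L) x) := by
  obtain ⟨hJ, hM⟩ := hL.maxChainCard_eq
  have hlen : maxChainCard (Set.Icc (⊥ : L) x) = #{j | SupIrred j ∧ j ≤ x} + 1 := by
    rw [maxChainCard_subtype, Set.Icc_bot, maxChainCardIn_Iic_eq hJ]
  have hsplit := maxChainCard_add_one_le_of_mem_spineF hx
  rw [maxChainCardIn_Iic_eq hJ] at hsplit
  have hup := maxChainCardIn_Ici_le x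
  have hsum := card_filter_add_card_filter_not (s := ({m | InfIrred m} : Finset L)) (x ≤ ·)
  simp only [filter_filter] at hsum
  have hmeet_ge := maxChainCard_le_numMeetIrred_add_one (L := Set.Icc (⊥ : L) x)
  have hmeet_le := card_infIrred_Icc_bot_le (x := x)
  rw [numMeetIrred_eq_card_infIrred] at hmeet_ge
  refine ⟨⟨?_, ?_⟩, exists_leftModular_maxChain_Icc_bot hL.2⟩
  · rw [hlen, numJoinIrred_eq_card_supIrred, card_supIrred_Icc_bot]
    simp
  · rw [numMeetIrred_eq_card_infIrred]
    omega

theorem image_val_spineF_Icc_bot {x : L} [Fintype (Set.Icc (⊥ : L) x)]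
    (hN : maxChainCard L = #{j : L | SupIrred j} + 1) (hx : x ∈ spineF L) :
    Subtype.val '' (spineF (Set.Icc (⊥ : L) x) : Set (Set.Icc (⊥ : L) x)) =
      (spineF L : Set L) ∩ Set.Icc (⊥ : L) x := by
  have hlen := maxChainCardIn_Iic_eq hN x
  have hsplit := maxChainCard_add_one_le_of_mem_spineF hx
  ext z
  constructor
  · rintro ⟨a, ha, rfl⟩
    obtain ⟨C, hC, hCx, hcard, haC⟩ := mem_spineF_subtype_iff.1 (mem_coe.1 ha)
    rw [Set.Icc_bot, hlen] at hcard
    obtain ⟨D, hD, hCD, hDcard⟩ :=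
      hC.exists_superset_card_add_maxChainCardIn_Ici_le fun c hc => (hCx hc).2
    exact ⟨mem_coe.2 (mem_spineF_of_le_card hD (by omega) (hCD haC)), a.2⟩
  · rintro ⟨hz, hzx⟩
    obtain ⟨C, hC, hcard, hzC⟩ := mem_spineF_iff.1 (mem_coe.1 hz)
    have hCx : ↑(C.image (· ⊓ x)) ⊆ Set.Icc (⊥ : L) x := by simp [Set.subset_def]
    refine ⟨⟨z, hzx⟩, mem_coe.2 (mem_spineF_subtype_iff.2 ⟨_, hC.image_inf x, hCx, ?_,
      mem_image.2 ⟨z, hzC, inf_eq_left.2 hzx.2⟩⟩), rfl⟩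
    refine le_antisymm (card_le_maxChainCardIn (hC.image_inf x) hCx) ?_
    rw [Set.Icc_bot, hlen]
    exact card_supIrred_le_add_one_le_card_image_inf hN hC hcard x

end Trim

/-- If `L` is a finite trim lattice and `x ∈ spine(L)`, then the
interval `[⊥, x]` of `L` is a trim lattice whose spine is `spine(L) ∩ [⊥, x]`. -/
theorem stmt_11 {L : Type*} [Fintype L] [Lattice L] [BoundedOrder L]
    (hL : IsTrim L) (x : L) (hx : x ∈ spineF L) :
    IsTrim (Set.Icc (⊥ : L) x) ∧
      Subtype.val '' ((spineF (Set.Icc (⊥ : L) x) : Finset (Set.Icc (⊥ : L) x)) : Set (Set.Icc (⊥ : L) x)) =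
        (spineF L : Set L) ∩ Set.Icc (⊥ : L) x :=
  ⟨isTrim_Icc_bot hL hx, image_val_spineF_Icc_bot hL.maxChainCard_eq.1 hx⟩
end

section
/- Let $L$ be a finite trim lattice with Ungarian Markov chain parameter $p \in (0,1]$. Then the expected top-to-bottom absorption time satisfies $\mathcal{E}(L) \leq \mathcal{E}(\mathrm{spine}(L))$. -/
open Finset
open scoped Classical

/-- The set of elements of the spine covered, within the spine, by `x`. -/
noncomputable def spineCov (L : Type*) [Fintype L] [Lattice L] (x : L) : Finset L :=
  (spineF L).filter (fun y => y < x ∧ ∀ z ∈ spineF L, y < z → ¬ z < x)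

/-- Transition probabilities of the Ungarian Markov chain on the spine of `L`
(a sublattice of `L`, so meets may be computed in `L`). -/
noncomputable def spineP {L : Type*} [Fintype L] [Lattice L] [BoundedOrder L]
    (p : ℝ) (x y : L) : ℝ :=
  ∑ T ∈ (spineCov L x).powerset.filter (fun T => (insert x T).inf id = y),
    p ^ T.card * (1 - p) ^ ((spineCov L x).card - T.card)

/-- `E'` is the expected-number-of-steps-to-`⊥` function of the Ungarian Markov chain
on the spine of `L`. -/
def IsSpineExp {L : Type*} [Fintype L] [Lattice L] [BoundedOrder L]
    (p : ℝ) (E' : L → ℝ) : Prop :=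
  E' ⊥ = 0 ∧ ∀ x ∈ spineF L, x ≠ ⊥ →
    E' x = 1 + ∑ y ∈ spineF L, spineP p x y * E' y

/-!
In an extremal lattice with `n` join-irreducibles, a chain of maximum length `n + 1` gains
exactly one join-irreducible at each step. Reading off the join-irreducible gained at step `k`
and a meet-irreducible that cuts the chain between steps `k - 1` and `k` gives Markowsky's
bijection `κ` from join- to meet-irreducibles together with an order on the join-irreducibles in
which `j ≤ κ j'` whenever `j` comes before `j'`, while `j ≰ κ j` always.

The spine is then the set of `x` such that every join-irreducible `j` satisfies `j ≤ x` or
`x ≤ κ j`. It is closed under meets, and a spine cover `z` of a spine element `s` lies above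
all join-irreducibles below `s` but one. So for `x ≤ s` the map `z ↦ x ⊓ z` sends the spine
covers of `s` that are not above `x` injectively to covers of `x`.

Couple the two Ungarian chains by letting each cover `x ⊓ z` be chosen exactly when `z` is.
Then after one step the chain started at `x` is below the spine chain started at `s`. By
induction on `s`, and then on `x`, `E x ≤ E' s`. The one case the induction cannot handle is
when neither chain moves, and this has probability `(1 - p) ^ (k + r) < 1`, where `k` counts the
spine covers of `s` and `r` the covers of `x` not of the form `x ⊓ z`.
-/
open OrderDual

section Irreducibles

variable {L : Type*} [Fintype L] [Lattice L]

noncomputable def joinIrreds (L : Type*) [Fintype L] [Preorder L] : Finset L :=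
  univ.filter fun a => #(univ.filter (· ⋖ a)) = 1

noncomputable def meetIrreds (L : Type*) [Fintype L] [Preorder L] : Finset L :=
  univ.filter fun a => #(univ.filter (a ⋖ ·)) = 1

noncomputable def joinIrredsBelow (x : L) : Finset L :=
  (joinIrreds L).filter (· ≤ x)

@[simp]
theorem mem_joinIrredsBelow {j x : L} : j ∈ joinIrredsBelow x ↔ j ∈ joinIrreds L ∧ j ≤ x :=
  mem_filter

theorem toDual_mem_joinIrreds_iff {a : L} : toDual a ∈ joinIrreds Lᵒᵈ ↔ a ∈ meetIrreds L := by
  simp only [joinIrreds, meetIrreds, mem_filter, mem_univ, true_and]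
  rw [← card_map ⟨ofDual, ofDual.injective⟩]
  congr! 2
  ext b
  simp [toDual_covBy_toDual_iff]

/-- An element that is not join-irreducible is the join of two of its lower covers, so one of them
is still not below `x`. -/
theorem exists_mem_joinIrreds_le_not_le {x y : L} (h : ¬ y ≤ x) :
    ∃ j ∈ joinIrreds L, j ≤ y ∧ ¬ j ≤ x := by
  induction y using WellFoundedLT.induction with
  | _ y ih =>
  by_cases hy : y ∈ joinIrreds L
  · exact ⟨y, hy, le_rfl, h⟩
  obtain ⟨z, -, hz⟩ := exists_le_covBy_of_lt (inf_lt_left.2 h)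
  have hcard : 1 < #(univ.filter (· ⋖ y)) := by
    have : 0 < #(univ.filter (· ⋖ y)) := card_pos.2 ⟨z, by simpa using hz⟩
    simp only [joinIrreds, mem_filter, mem_univ, true_and] at hy
    omega
  obtain ⟨z', hz', hne⟩ := exists_mem_ne hcard z
  simp only [mem_filter, mem_univ, true_and] at hz'
  have hsup : z ⊔ z' = y := hz.wcovBy.sup_eq hz'.wcovBy hne.symm
  have hboth : ¬ (z ≤ x ∧ z' ≤ x) := fun hle => h (hsup ▸ sup_le hle.1 hle.2)
  rcases not_and_or.1 hboth with hzx | hzx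
  · obtain ⟨j, hj, hjz, hjx⟩ := ih z hz.lt hzx
    exact ⟨j, hj, hjz.trans hz.le, hjx⟩
  · obtain ⟨j, hj, hjz, hjx⟩ := ih z' hz'.lt hzx
    exact ⟨j, hj, hjz.trans hz'.le, hjx⟩

theorem exists_mem_meetIrreds_le_not_le {x y : L} (h : ¬ y ≤ x) :
    ∃ m ∈ meetIrreds L, x ≤ m ∧ ¬ y ≤ m := by
  obtain ⟨m, hm, hxm, hym⟩ :=
    exists_mem_joinIrreds_le_not_le (L := Lᵒᵈ) (x := toDual y) (y := toDual x) h
  exact ⟨ofDual m, toDual_mem_joinIrreds_iff.1 hm, hxm, hym⟩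

theorem joinIrredsBelow_subset_joinIrredsBelow {x y : L} :
    joinIrredsBelow x ⊆ joinIrredsBelow y ↔ x ≤ y := by
  refine ⟨fun h => ?_, fun h j hj => ?_⟩
  · by_contra hxy
    obtain ⟨j, hj, hjx, hjy⟩ := exists_mem_joinIrreds_le_not_le hxy
    exact hjy (mem_joinIrredsBelow.1 (h (mem_joinIrredsBelow.2 ⟨hj, hjx⟩))).2
  · obtain ⟨hj, hjx⟩ := mem_joinIrredsBelow.1 hj
    exact mem_joinIrredsBelow.2 ⟨hj, hjx.trans h⟩

theorem strictMono_card_joinIrredsBelow : StrictMono fun x : L => #(joinIrredsBelow x) :=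
  fun _ _ h => card_lt_card <| ssubset_iff_subset_not_subset.2
    ⟨joinIrredsBelow_subset_joinIrredsBelow.2 h.le,
      mt joinIrredsBelow_subset_joinIrredsBelow.1 h.not_ge⟩

theorem joinIrredsBelow_inf (x y : L) :
    joinIrredsBelow (x ⊓ y) = joinIrredsBelow x ∩ joinIrredsBelow y := by
  ext j
  simp only [mem_joinIrredsBelow, mem_inter, le_inf_iff]
  tauto

theorem joinIrredsBelow_injective : Function.Injective (joinIrredsBelow : L → Finset L) :=
  fun _ _ h => le_antisymm (joinIrredsBelow_subset_joinIrredsBelow.1 h.le)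
    (joinIrredsBelow_subset_joinIrredsBelow.1 h.ge)

theorem joinIrredsBelow_inf_eq_erase {s z x j : L}
    (h : joinIrredsBelow z = (joinIrredsBelow s).erase j) (hxs : x ≤ s) (hxz : ¬ x ≤ z) :
    j ∈ joinIrredsBelow x ∧ joinIrredsBelow (x ⊓ z) = (joinIrredsBelow x).erase j := by
  have hxs' := joinIrredsBelow_subset_joinIrredsBelow.2 hxs
  refine ⟨?_, by rw [joinIrredsBelow_inf, h, inter_erase, inter_eq_left.2 hxs']⟩
  by_contra hjx
  refine hxz (joinIrredsBelow_subset_joinIrredsBelow.1 fun t ht => h ▸ mem_erase.2 ⟨?_, hxs' ht⟩)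
  rintro rfl
  exact hjx ht

theorem covBy_of_joinIrredsBelow_eq_erase {x y j : L} (hj : j ∈ joinIrredsBelow x)
    (h : joinIrredsBelow y = (joinIrredsBelow x).erase j) : y ⋖ x := by
  have hcard : #(joinIrredsBelow y) + 1 = #(joinIrredsBelow x) := by
    rw [h, card_erase_add_one hj]
  have hyx : y < x := lt_of_le_of_ne
    (joinIrredsBelow_subset_joinIrredsBelow.1 (h ▸ erase_subset j _))
    (by rintro rfl; omega)
  refine ⟨hyx, fun t hyt htx => ?_⟩
  have h₁ : #(joinIrredsBelow y) < #(joinIrredsBelow t) := strictMono_card_joinIrredsBelow hyt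
  have h₂ : #(joinIrredsBelow t) < #(joinIrredsBelow x) := strictMono_card_joinIrredsBelow htx
  omega

end Irreducibles

section Chains

variable {α : Type*} [PartialOrder α]

theorem IsChain.injOn_of_strictMono {β : Type*} [Preorder β] {s : Set α}
    (hs : IsChain (· ≤ ·) s) {f : α → β} (hf : StrictMono f) : s.InjOn f := by
  intro a ha b hb hab
  by_contra hne
  rcases hs ha hb hne with h | h
  · exact (hf (h.lt_of_ne hne)).ne hab
  · exact (hf (h.lt_of_ne (Ne.symm hne))).ne' hab

theorem IsChain.card_le_of_strictMono_of_strictAnti {D : Finset α}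
    (hD : IsChain (· ≤ ·) (D : Set α)) {f g : α → ℕ} (hf : StrictMono f) (hg : StrictAnti g)
    {x : α} (hx : x ∈ D) : #D ≤ f x + g x + 1 := by
  have hbelow : #(D.filter (· < x)) ≤ f x := by
    simpa using card_le_card_of_injOn f (t := range (f x))
      (fun y hy => mem_range.2 (hf (mem_filter.1 hy).2))
      ((hD.injOn_of_strictMono hf).mono (coe_subset.2 (filter_subset _ _)))
  have habove : #(D.filter (x < ·)) ≤ g x := by
    simpa using card_le_card_of_injOn g (t := range (g x))
      (fun y hy => mem_range.2 (hg (mem_filter.1 hy).2))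
      ((hD.injOn_of_strictMono hg.dual_right).of_comp.mono (coe_subset.2 (filter_subset _ _)))
  have hsplit : D ⊆ insert x (D.filter (· < x) ∪ D.filter (x < ·)) := by
    intro y hy
    rcases eq_or_ne y x with rfl | hne
    · exact mem_insert_self _ _
    rcases hD hy hx hne with h | h
    · exact mem_insert_of_mem (mem_union_left _ (mem_filter.2 ⟨hy, h.lt_of_ne hne⟩))
    · exact mem_insert_of_mem (mem_union_right _ (mem_filter.2 ⟨hy, h.lt_of_ne hne.symm⟩))
  calc #D ≤ #(D.filter (· < x) ∪ D.filter (x < ·)) + 1 :=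
        (card_le_card hsplit).trans (card_insert_le _ _)
    _ ≤ f x + g x + 1 := by
        have := card_union_le (D.filter (· < x)) (D.filter (x < ·))
        omega

theorem IsChain.exists_mem_eq_of_strictMono {D : Finset α} (hD : IsChain (· ≤ ·) (D : Set α))
    {f : α → ℕ} (hf : StrictMono f) {n : ℕ} (hfn : ∀ y ∈ D, f y ≤ n) (hD_card : #D = n + 1)
    {k : ℕ} (hk : k ≤ n) : ∃ y ∈ D, f y = k := by
  obtain ⟨y, hy, hyk⟩ := surj_on_of_inj_on_of_card_le (t := range (n + 1)) (fun y _ => f y)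
    (fun y hy => mem_range.2 (Nat.lt_succ_of_le (hfn y hy)))
    (fun _ _ ha hb h => hD.injOn_of_strictMono hf ha hb h) (by simp [hD_card]) k
    (mem_range.2 (Nat.lt_succ_of_le hk))
  exact ⟨y, hy, hyk.symm⟩

end Chains

theorem card_le_maxChainCard {L : Type*} [Fintype L] [Preorder L] {C : Finset L}
    (hC : IsChain (· ≤ ·) (C : Set L)) : #C ≤ maxChainCard L :=
  le_sup (f := card) (by simpa using hC)

theorem exists_isChain_card_eq_maxChainCard (L : Type*) [Fintype L] [Preorder L] :
    ∃ C : Finset L, IsChain (· ≤ ·) (C : Set L) ∧ #C = maxChainCard L := by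
  obtain ⟨C, hC, h⟩ := exists_mem_eq_sup
    (univ.powerset.filter fun C : Finset L => IsChain (· ≤ ·) (C : Set L)) ⟨∅, by simp⟩ card
  exact ⟨C, (mem_filter.1 hC).2, h.symm⟩

section Levels

variable {L : Type*} [Fintype L] [Lattice L] {c : ℕ → L}

theorem covBy_of_levels (hc : ∀ k ≤ #(joinIrreds L), #(joinIrredsBelow (c k)) = k)
    (hmono : ∀ i k, i ≤ k → k ≤ #(joinIrreds L) → c i ≤ c k) {k : ℕ} (hk : 0 < k)
    (hkn : k ≤ #(joinIrreds L)) : c (k - 1) ⋖ c k := by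
  have hk' : #(joinIrredsBelow (c (k - 1))) = k - 1 := hc _ (by omega)
  refine ⟨(hmono _ _ (by omega) hkn).lt_of_ne fun h => ?_, fun y h₁ h₂ => ?_⟩
  · rw [h, hc k hkn] at hk'
    omega
  · have h₁ := strictMono_card_joinIrredsBelow h₁
    have h₂ := strictMono_card_joinIrredsBelow h₂
    simp only [hk', hc k hkn] at h₁ h₂
    omega

theorem exists_first_level (hc : ∀ k ≤ #(joinIrreds L), #(joinIrredsBelow (c k)) = k)
    {j : L} (hj : j ∈ joinIrreds L) :
    ∃ k, 0 < k ∧ k ≤ #(joinIrreds L) ∧ j ≤ c k ∧ ¬ j ≤ c (k - 1) := by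
  have htop : j ≤ c #(joinIrreds L) := by
    have : joinIrredsBelow (c #(joinIrreds L)) = joinIrreds L :=
      eq_of_subset_of_card_le (filter_subset _ _) (hc _ le_rfl).ge
    rw [← this] at hj
    exact (mem_joinIrredsBelow.1 hj).2
  have hbot : ¬ j ≤ c 0 := fun h => by
    simpa [card_eq_zero.1 (hc 0 (Nat.zero_le _))] using mem_joinIrredsBelow.2 ⟨hj, h⟩
  have hex : ∃ k, j ≤ c k := ⟨_, htop⟩
  have hpos : 0 < Nat.find hex := Nat.pos_of_ne_zero fun h0 => hbot (h0 ▸ Nat.find_spec hex)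
  exact ⟨Nat.find hex, hpos, Nat.find_min' hex htop, Nat.find_spec hex,
    Nat.find_min hex (by omega)⟩

end Levels

/-- Markowsky's labelling of an extremal lattice by a chain of maximum length: `idx j` is the
first position on the chain above the join-irreducible `j`, and `κ j` is a meet-irreducible
cutting the chain just below that position. -/
structure KappaLabeling (L : Type*) [Fintype L] [Lattice L] where
  κ : L → L
  idx : L → ℕ
  κ_mem_meetIrreds : ∀ j ∈ joinIrreds L, κ j ∈ meetIrreds L
  not_le_κ : ∀ j ∈ joinIrreds L, ¬ j ≤ κ j
  le_κ_of_idx_lt : ∀ j ∈ joinIrreds L, ∀ j' ∈ joinIrreds L, idx j < idx j' → j ≤ κ j'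
  injOn_idx : Set.InjOn idx (joinIrreds L)

section Extremal

variable {L : Type*} [Fintype L] [Lattice L]

def IsExtremal (L : Type*) [Fintype L] [Lattice L] : Prop :=
  maxChainCard L - 1 = numJoinIrred L ∧ maxChainCard L - 1 = numMeetIrred L

theorem IsExtremal.maxChainCard_eq [OrderBot L] (hL : IsExtremal L) :
    maxChainCard L = #(joinIrreds L) + 1 := by
  have h₁ : #({⊥} : Finset L) ≤ maxChainCard L :=
    card_le_maxChainCard (by rw [coe_singleton]; exact IsChain.singleton)
  -- `numJoinIrred L` unfolds to `#(joinIrreds L)`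
  have h₂ : maxChainCard L - 1 = #(joinIrreds L) := hL.1
  rw [card_singleton] at h₁
  omega

theorem IsExtremal.card_meetIrreds (hL : IsExtremal L) : #(meetIrreds L) = #(joinIrreds L) :=
  hL.2.symm.trans hL.1

/-- The number of join-irreducibles below an element is strictly monotone and at most
`n = #(joinIrreds L)`, so along a chain of maximum length `n + 1` it takes every value
`0, …, n`: this gives the levels `c 0 < c 1 < ⋯ < c n`. -/
theorem IsExtremal.exists_levels [OrderBot L] (hL : IsExtremal L) : ∃ c : ℕ → L,
    (∀ k ≤ #(joinIrreds L), #(joinIrredsBelow (c k)) = k) ∧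
    ∀ i k, i ≤ k → k ≤ #(joinIrreds L) → c i ≤ c k := by
  obtain ⟨C, hC, hC_card⟩ := exists_isChain_card_eq_maxChainCard L
  have hlevel : ∀ k ≤ #(joinIrreds L), ∃ y ∈ C, #(joinIrredsBelow y) = k := fun k hk =>
    hC.exists_mem_eq_of_strictMono strictMono_card_joinIrredsBelow
      (fun y _ => card_filter_le _ _) (hC_card.trans hL.maxChainCard_eq) hk
  choose! c hcC hc using hlevel
  refine ⟨c, hc, fun i k hik hk => ?_⟩
  rcases hC.total (hcC i (hik.trans hk)) (hcC k hk) with h | h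
  · exact h
  · have := strictMono_card_joinIrredsBelow.monotone h
    simp only [hc i (hik.trans hk), hc k hk] at this
    rw [le_antisymm hik this]

theorem IsExtremal.nonempty_kappaLabeling [OrderBot L] (hL : IsExtremal L) :
    Nonempty (KappaLabeling L) := by
  obtain ⟨c, hc, hmono⟩ := hL.exists_levels
  choose! idx hidx_pos hidx_le hle_c hnot_le_c using fun j (hj : j ∈ joinIrreds L) =>
    exists_first_level hc hj
  have hcov : ∀ j ∈ joinIrreds L, c (idx j - 1) ⋖ c (idx j) := fun j hj =>
    covBy_of_levels hc hmono (hidx_pos j hj) (hidx_le j hj)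
  choose! κ hκ_mem hκ_ge hκ_not_ge using fun j (hj : j ∈ joinIrreds L) =>
    exists_mem_meetIrreds_le_not_le (hcov j hj).lt.not_ge
  refine ⟨⟨κ, idx, hκ_mem, fun j hj hjκ => ?_, fun j hj j' hj' hlt => ?_, fun j hj j' hj' h => ?_⟩⟩
  · have hmeet : κ j ⊓ c (idx j) = c (idx j - 1) :=
      ((hcov j hj).eq_or_eq (le_inf (hκ_ge j hj) (hcov j hj).le) inf_le_right).resolve_right
        (inf_lt_right.2 (hκ_not_ge j hj)).ne
    exact hnot_le_c j hj (hmeet ▸ le_inf hjκ (hle_c j hj))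
  · exact (hle_c j hj).trans ((hmono _ _ (by omega) (by have := hidx_le j' hj'; omega)).trans
      (hκ_ge j' hj'))
  · -- only one join-irreducible enters between two consecutive levels
    have hsub : joinIrredsBelow (c (idx j - 1)) ⊆ joinIrredsBelow (c (idx j)) :=
      joinIrredsBelow_subset_joinIrredsBelow.2 (hcov j hj).le
    have hcard : #(joinIrredsBelow (c (idx j)) \ joinIrredsBelow (c (idx j - 1))) = 1 := by
      have := hidx_pos j hj
      rw [card_sdiff_of_subset hsub, hc _ (hidx_le j hj), hc _ (by have := hidx_le j hj; omega)]
      omega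
    have hmem : ∀ t ∈ joinIrreds L, idx t = idx j →
        t ∈ joinIrredsBelow (c (idx j)) \ joinIrredsBelow (c (idx j - 1)) := fun t ht htj =>
      mem_sdiff.2 ⟨mem_joinIrredsBelow.2 ⟨ht, htj ▸ hle_c t ht⟩,
        fun h => hnot_le_c t ht (htj ▸ (mem_joinIrredsBelow.1 h).2)⟩
    exact card_le_one.1 hcard.le _ (hmem j hj rfl) _ (hmem j' hj' h.symm)

end Extremal

namespace KappaLabeling

variable {L : Type*} [Fintype L] [Lattice L] (lab : KappaLabeling L) {x y : L}

theorem injOn_κ : Set.InjOn lab.κ (joinIrreds L) := by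
  intro j hj j' hj' h
  by_contra hne
  rcases lt_or_gt_of_ne (lab.injOn_idx.ne hj hj' hne) with hlt | hlt
  · exact lab.not_le_κ j hj (h ▸ lab.le_κ_of_idx_lt j hj j' hj' hlt)
  · exact lab.not_le_κ j' hj' (h ▸ lab.le_κ_of_idx_lt j' hj' j hj hlt)

theorem exists_κ_eq (hL : IsExtremal L) {m : L} (hm : m ∈ meetIrreds L) :
    ∃ j ∈ joinIrreds L, lab.κ j = m := by
  obtain ⟨j, hj, h⟩ := surj_on_of_inj_on_of_card_le (fun j _ => lab.κ j) lab.κ_mem_meetIrreds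
    (fun _ _ ha hb h => lab.injOn_κ ha hb h) hL.card_meetIrreds.le m hm
  exact ⟨j, hj, h.symm⟩

noncomputable def kappaAbove (x : L) : Finset L :=
  (joinIrreds L).filter (x ≤ lab.κ ·)

@[simp]
theorem mem_kappaAbove {j : L} : j ∈ lab.kappaAbove x ↔ j ∈ joinIrreds L ∧ x ≤ lab.κ j :=
  mem_filter

theorem strictAnti_card_kappaAbove (hL : IsExtremal L) :
    StrictAnti fun x => #(lab.kappaAbove x) := by
  intro x y hxy
  obtain ⟨m, hm, hxm, hym⟩ := exists_mem_meetIrreds_le_not_le hxy.not_ge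
  obtain ⟨j, hj, rfl⟩ := lab.exists_κ_eq hL hm
  refine card_lt_card ⟨fun t ht => ?_, fun h => ?_⟩
  · obtain ⟨ht, hyt⟩ := lab.mem_kappaAbove.1 ht
    exact lab.mem_kappaAbove.2 ⟨ht, hxy.le.trans hyt⟩
  · exact hym (lab.mem_kappaAbove.1 (h (lab.mem_kappaAbove.2 ⟨hj, hxm⟩))).2

theorem disjoint_joinIrredsBelow_kappaAbove (x : L) :
    Disjoint (joinIrredsBelow x) (lab.kappaAbove x) :=
  disjoint_left.2 fun _ hjx hxj =>
    lab.not_le_κ _ (mem_joinIrredsBelow.1 hjx).1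
      ((mem_joinIrredsBelow.1 hjx).2.trans (lab.mem_kappaAbove.1 hxj).2)

/-- These are exactly the elements of the spine: see `Separates.mem_spineF` and
`separates_of_mem_spineF`. -/
def Separates (x : L) : Prop :=
  ∀ j ∈ joinIrreds L, j ≤ x ∨ x ≤ lab.κ j

theorem separates_iff_card_add_card :
    lab.Separates x ↔ #(joinIrredsBelow x) + #(lab.kappaAbove x) = #(joinIrreds L) := by
  rw [← card_union_of_disjoint (lab.disjoint_joinIrredsBelow_kappaAbove x)]
  have hsub : joinIrredsBelow x ∪ lab.kappaAbove x ⊆ joinIrreds L :=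
    union_subset (filter_subset _ _) (filter_subset _ _)
  refine ⟨fun h => congrArg card (hsub.antisymm fun j hj => ?_), fun h j hj => ?_⟩
  · rcases h j hj with hjx | hxj
    · exact mem_union_left _ (mem_joinIrredsBelow.2 ⟨hj, hjx⟩)
    · exact mem_union_right _ (lab.mem_kappaAbove.2 ⟨hj, hxj⟩)
  · rw [← eq_of_subset_of_card_le hsub h.ge, mem_union, mem_joinIrredsBelow,
      lab.mem_kappaAbove] at hj
    exact hj.imp And.right And.right

variable {lab}

theorem Separates.inf (hx : lab.Separates x) (hy : lab.Separates y) : lab.Separates (x ⊓ y) := by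
  intro j hj
  rcases hx j hj with hjx | hxj
  · rcases hy j hj with hjy | hyj
    · exact Or.inl (le_inf hjx hjy)
    · exact Or.inr (inf_le_right.trans hyj)
  · exact Or.inr (inf_le_left.trans hxj)

/-- Going down from `x`, remove the last join-irreducible below `x` by meeting with its `κ`. -/
theorem Separates.exists_chain_le (hx : lab.Separates x) :
    ∃ D : Finset L, IsChain (· ≤ ·) (D : Set L) ∧ x ∈ D ∧ (∀ y ∈ D, y ≤ x) ∧
      #D = #(joinIrredsBelow x) + 1 := by
  induction x using WellFoundedLT.induction with
  | _ x ih =>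
  rcases (joinIrredsBelow x).eq_empty_or_nonempty with h | hne
  · exact ⟨{x}, by simp, mem_singleton_self x, by simp, by simp [h]⟩
  obtain ⟨j, hjx, hjmax⟩ := exists_max_image _ lab.idx hne
  obtain ⟨hj, hjx'⟩ := mem_joinIrredsBelow.1 hjx
  have hA : joinIrredsBelow (x ⊓ lab.κ j) = (joinIrredsBelow x).erase j := by
    ext t
    simp only [mem_joinIrredsBelow, mem_erase, le_inf_iff]
    refine ⟨fun ⟨ht, htx, htκ⟩ => ⟨fun h => lab.not_le_κ j hj (h ▸ htκ), ht, htx⟩,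
      fun ⟨htj, ht, htx⟩ => ⟨ht, htx, lab.le_κ_of_idx_lt t ht j hj ?_⟩⟩
    exact (hjmax t (mem_joinIrredsBelow.2 ⟨ht, htx⟩)).lt_of_ne (lab.injOn_idx.ne ht hj htj)
  have hsep : lab.Separates (x ⊓ lab.κ j) := by
    intro t ht
    by_cases htj : t = j
    · exact Or.inr (htj ▸ inf_le_right)
    refine (hx t ht).imp (fun htx => ?_) (inf_le_left.trans ·)
    exact (mem_joinIrredsBelow.1 (hA ▸ mem_erase.2 ⟨htj, mem_joinIrredsBelow.2 ⟨ht, htx⟩⟩)).2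
  have hlt : x ⊓ lab.κ j < x := inf_lt_left.2 fun h => lab.not_le_κ j hj (hjx'.trans h)
  obtain ⟨D, hD, -, hDle, hDcard⟩ := ih _ hlt hsep
  have hxD : x ∉ D := fun h => (hDle x h).not_gt hlt
  refine ⟨insert x D, ?_, mem_insert_self _ _,
    forall_mem_insert _ _ _ |>.2 ⟨le_rfl, fun y hy => (hDle y hy).trans hlt.le⟩, ?_⟩
  · rw [coe_insert]
    exact hD.insert fun b hb _ => Or.inr ((hDle b hb).trans hlt.le)
  rw [card_insert_of_notMem hxD, hDcard, hA, card_erase_add_one hjx]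

/-- Going up from `x`, add the first join-irreducible whose `κ` lies above `x`. -/
theorem Separates.exists_chain_ge (hx : lab.Separates x) :
    ∃ D : Finset L, IsChain (· ≤ ·) (D : Set L) ∧ x ∈ D ∧ (∀ y ∈ D, x ≤ y) ∧
      #D = #(lab.kappaAbove x) + 1 := by
  induction x using WellFoundedGT.induction with
  | _ x ih =>
  rcases (lab.kappaAbove x).eq_empty_or_nonempty with h | hne
  · exact ⟨{x}, by simp, mem_singleton_self x, by simp, by simp [h]⟩
  obtain ⟨j, hjx, hjmin⟩ := exists_min_image _ lab.idx hne
  obtain ⟨hj, hxj⟩ := lab.mem_kappaAbove.1 hjx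
  have hK : lab.kappaAbove (x ⊔ j) = (lab.kappaAbove x).erase j := by
    ext t
    simp only [mem_kappaAbove, mem_erase, sup_le_iff]
    refine ⟨fun ⟨ht, hxt, hjt⟩ => ⟨fun h => lab.not_le_κ j hj (h ▸ hjt), ht, hxt⟩,
      fun ⟨htj, ht, hxt⟩ => ⟨ht, hxt, lab.le_κ_of_idx_lt j hj t ht ?_⟩⟩
    exact (hjmin t (lab.mem_kappaAbove.2 ⟨ht, hxt⟩)).lt_of_ne (lab.injOn_idx.ne hj ht (Ne.symm htj))
  have hsep : lab.Separates (x ⊔ j) := by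
    intro t ht
    by_cases htj : t = j
    · exact Or.inl (htj ▸ le_sup_right)
    refine (hx t ht).imp (le_sup_left.trans' ·) (fun hxt => ?_)
    exact (lab.mem_kappaAbove.1 (hK ▸ mem_erase.2 ⟨htj, lab.mem_kappaAbove.2 ⟨ht, hxt⟩⟩)).2
  have hlt : x < x ⊔ j := left_lt_sup.2 fun h => lab.not_le_κ j hj (h.trans hxj)
  obtain ⟨D, hD, -, hDge, hDcard⟩ := ih _ hlt hsep
  have hxD : x ∉ D := fun h => (hDge x h).not_gt hlt
  refine ⟨insert x D, ?_, mem_insert_self _ _,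
    forall_mem_insert _ _ _ |>.2 ⟨le_rfl, fun y hy => hlt.le.trans (hDge y hy)⟩, ?_⟩
  · rw [coe_insert]
    exact hD.insert fun b hb _ => Or.inl (hlt.le.trans (hDge b hb))
  rw [card_insert_of_notMem hxD, hDcard, hK, card_erase_add_one hjx]

variable [OrderBot L]

theorem Separates.mem_spineF (hL : IsExtremal L) (hx : lab.Separates x) : x ∈ spineF L := by
  obtain ⟨D₁, hD₁, hxD₁, hD₁le, hD₁card⟩ := hx.exists_chain_le
  obtain ⟨D₂, hD₂, hxD₂, hD₂ge, hD₂card⟩ := hx.exists_chain_ge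
  have hinter : D₁ ∩ D₂ = {x} := by
    ext y
    simp only [mem_inter, mem_singleton]
    exact ⟨fun ⟨h₁, h₂⟩ => le_antisymm (hD₁le y h₁) (hD₂ge y h₂), fun h => h ▸ ⟨hxD₁, hxD₂⟩⟩
  have hchain : IsChain (· ≤ ·) ((D₁ ∪ D₂ : Finset L) : Set L) := by
    rw [coe_union, isChain_union]
    exact ⟨hD₁, hD₂, fun a ha b hb _ => Or.inl ((hD₁le a ha).trans (hD₂ge b hb))⟩
  refine mem_filter.2 ⟨mem_univ _, D₁ ∪ D₂, hchain, ?_, mem_union_left _ hxD₁⟩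
  have := card_union_add_card_inter D₁ D₂
  rw [hinter, card_singleton] at this
  rw [hL.maxChainCard_eq, ← lab.separates_iff_card_add_card.1 hx]
  omega

variable (lab) in
theorem separates_of_mem_spineF (hL : IsExtremal L) (hx : x ∈ spineF L) : lab.Separates x := by
  obtain ⟨C, hC, hC_card, hxC⟩ := (mem_filter.1 hx).2
  have hchain := hC.card_le_of_strictMono_of_strictAnti strictMono_card_joinIrredsBelow
    (lab.strictAnti_card_kappaAbove hL) hxC
  have hle : #(joinIrredsBelow x) + #(lab.kappaAbove x) ≤ #(joinIrreds L) := by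
    rw [← card_union_of_disjoint (lab.disjoint_joinIrredsBelow_kappaAbove x)]
    exact card_le_card (union_subset (filter_subset _ _) (filter_subset _ _))
  rw [hC_card, hL.maxChainCard_eq] at hchain
  exact lab.separates_iff_card_add_card.2 (by omega)

end KappaLabeling

section Spine

variable {L : Type*} [Fintype L] [Lattice L] [BoundedOrder L]

/-- Among the join-irreducibles below `s` but not below `z`, let `j` be the first one; then
`z ⊔ j` still separates, so it is `s`, and no other join-irreducible is missing below `z`. -/
theorem IsExtremal.exists_erase_of_mem_spineCov (hL : IsExtremal L) {s z : L} (hs : s ∈ spineF L)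
    (hz : z ∈ spineCov L s) :
    ∃ j, joinIrredsBelow z = (joinIrredsBelow s).erase j := by
  obtain ⟨lab⟩ := hL.nonempty_kappaLabeling
  obtain ⟨hzS, hzs, hzmax⟩ := mem_filter.1 hz
  have hsep_s := lab.separates_of_mem_spineF hL hs
  have hsep_z := lab.separates_of_mem_spineF hL hzS
  have hne : (joinIrredsBelow s \ joinIrredsBelow z).Nonempty :=
    sdiff_nonempty.2 (mt joinIrredsBelow_subset_joinIrredsBelow.1 hzs.not_ge)
  obtain ⟨j, hjD, hjmin⟩ := exists_min_image _ lab.idx hne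
  obtain ⟨hjA, hjz⟩ := mem_sdiff.1 hjD
  obtain ⟨hj, hjs⟩ := mem_joinIrredsBelow.1 hjA
  have hjκ : ∀ t ∈ joinIrredsBelow s, ¬ t ≤ z → t ≠ j → j ≤ lab.κ t := fun t hts htz htj =>
    lab.le_κ_of_idx_lt j hj t (mem_joinIrredsBelow.1 hts).1 <|
      (hjmin t (mem_sdiff.2 ⟨hts, fun h => htz (mem_joinIrredsBelow.1 h).2⟩)).lt_of_ne
        (lab.injOn_idx.ne hj (mem_joinIrredsBelow.1 hts).1 (Ne.symm htj))
  have hsup : z ⊔ j = s := by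
    have hsep : lab.Separates (z ⊔ j) := by
      intro t ht
      by_cases htw : t ≤ z ⊔ j
      · exact Or.inl htw
      have htz : ¬ t ≤ z := fun h => htw (h.trans le_sup_left)
      refine Or.inr (sup_le ((hsep_z t ht).resolve_left htz) ?_)
      by_cases hts : t ≤ s
      · exact hjκ t (mem_joinIrredsBelow.2 ⟨ht, hts⟩) htz fun h => htw (h ▸ le_sup_right)
      · exact hjs.trans ((hsep_s t ht).resolve_left hts)
    refine (sup_le hzs.le hjs).eq_of_not_lt fun hlt => hzmax _ (hsep.mem_spineF hL) ?_ hlt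
    exact left_lt_sup.2 (fun h => hjz (mem_joinIrredsBelow.2 ⟨hj, h⟩))
  refine ⟨j, ?_⟩
  ext t
  simp only [mem_erase, mem_joinIrredsBelow]
  refine ⟨fun ⟨ht, htz⟩ => ⟨?_, ht, htz.trans hzs.le⟩, fun ⟨htj, ht, hts⟩ => ⟨ht, ?_⟩⟩
  · rintro rfl
    exact hjz (mem_joinIrredsBelow.2 ⟨ht, htz⟩)
  · by_contra htz
    have hsκ : s ≤ lab.κ t := hsup ▸ sup_le ((hsep_z t ht).resolve_left htz)
      (hjκ t (mem_joinIrredsBelow.2 ⟨ht, hts⟩) htz htj)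
    exact lab.not_le_κ t ht (hts.trans hsκ)

theorem IsExtremal.inf_mem_spineF (hL : IsExtremal L) {s : L} (hs : s ∈ spineF L)
    {T : Finset L} (hT : T ⊆ spineF L) : (insert s T).inf id ∈ spineF L := by
  obtain ⟨lab⟩ := hL.nonempty_kappaLabeling
  refine (inf_mem {x | lab.Separates x} (fun j _ => Or.inl le_top)
    (fun x hx y hy => KappaLabeling.Separates.inf hx hy) _ _ fun y hy => ?_ :).mem_spineF hL
  rcases mem_insert.1 hy with rfl | hy
  · exact lab.separates_of_mem_spineF hL hs
  · exact lab.separates_of_mem_spineF hL (hT hy)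

theorem IsExtremal.bot_mem_spineF (hL : IsExtremal L) : (⊥ : L) ∈ spineF L := by
  obtain ⟨lab⟩ := hL.nonempty_kappaLabeling
  exact KappaLabeling.Separates.mem_spineF (lab := lab) hL fun j _ => Or.inr bot_le

theorem IsExtremal.top_mem_spineF (hL : IsExtremal L) : (⊤ : L) ∈ spineF L := by
  obtain ⟨lab⟩ := hL.nonempty_kappaLabeling
  exact KappaLabeling.Separates.mem_spineF (lab := lab) hL fun j _ => Or.inl le_top

theorem IsExtremal.spineCov_nonempty (hL : IsExtremal L) {s : L} (hs : s ≠ ⊥) :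
    (spineCov L s).Nonempty := by
  obtain ⟨z, hz⟩ := exists_maximal (s := (spineF L).filter (· < s))
    ⟨⊥, mem_filter.2 ⟨hL.bot_mem_spineF, bot_lt_iff_ne_bot.2 hs⟩⟩
  obtain ⟨hzS, hzs⟩ := mem_filter.1 hz.prop
  exact ⟨z, mem_filter.2 ⟨hzS, hzs, fun t ht hzt hts => hz.not_gt (mem_filter.2 ⟨ht, hts⟩) hzt⟩⟩

theorem IsExtremal.inf_covBy_of_mem_spineCov (hL : IsExtremal L) {s z x : L}
    (hs : s ∈ spineF L) (hz : z ∈ spineCov L s) (hxs : x ≤ s) (hxz : ¬ x ≤ z) : x ⊓ z ⋖ x := by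
  obtain ⟨j, hA⟩ := hL.exists_erase_of_mem_spineCov hs hz
  obtain ⟨hjx, hA'⟩ := joinIrredsBelow_inf_eq_erase hA hxs hxz
  exact covBy_of_joinIrredsBelow_eq_erase hjx hA'

theorem IsExtremal.injOn_inf_spineCov (hL : IsExtremal L) {s x : L} (hs : s ∈ spineF L)
    (hxs : x ≤ s) : Set.InjOn (x ⊓ ·) ((spineCov L s).filter (¬ x ≤ ·)) := by
  intro z₁ hz₁ z₂ hz₂ h
  obtain ⟨hz₁, hxz₁⟩ := mem_filter.1 hz₁
  obtain ⟨hz₂, hxz₂⟩ := mem_filter.1 hz₂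
  obtain ⟨j₁, hA₁⟩ := hL.exists_erase_of_mem_spineCov hs hz₁
  obtain ⟨j₂, hA₂⟩ := hL.exists_erase_of_mem_spineCov hs hz₂
  obtain ⟨hj₁, hA₁'⟩ := joinIrredsBelow_inf_eq_erase hA₁ hxs hxz₁
  obtain ⟨-, hA₂'⟩ := joinIrredsBelow_inf_eq_erase hA₂ hxs hxz₂
  have hj : j₁ = j₂ := (erase_inj _ hj₁).1 (hA₁'.symm.trans ((congrArg _ h).trans hA₂'))
  exact joinIrredsBelow_injective (hA₁.trans (hj ▸ hA₂.symm))

end Spine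

section Bernoulli

variable {α : Type*} (p : ℝ)

noncomputable def bernoulliExpect (A : Finset α) (f : Finset α → ℝ) : ℝ :=
  ∑ T ∈ A.powerset, p ^ #T * (1 - p) ^ (#A - #T) * f T

variable {p} {A B : Finset α} {f g : Finset α → ℝ}

theorem bernoulliExpect_const (A : Finset α) (c : ℝ) : bernoulliExpect p A (fun _ => c) = c := by
  rw [bernoulliExpect, ← sum_mul, sum_pow_mul_eq_add_pow, add_sub_cancel, one_pow, one_mul]

theorem bernoulliExpect_congr (h : ∀ T ⊆ A, f T = g T) :
    bernoulliExpect p A f = bernoulliExpect p A g :=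
  sum_congr rfl fun T hT => by rw [h T (mem_powerset.1 hT)]

theorem bernoulliExpect_empty (f : Finset α → ℝ) : bernoulliExpect p ∅ f = f ∅ := by
  simp [bernoulliExpect]

theorem bernoulliExpect_insert {a : α} (ha : a ∉ A) (f : Finset α → ℝ) :
    bernoulliExpect p (insert a A) f =
      p * bernoulliExpect p A (fun T => f (insert a T)) + (1 - p) * bernoulliExpect p A f := by
  rw [bernoulliExpect, sum_powerset_insert ha, add_comm, bernoulliExpect, bernoulliExpect,
    mul_sum, mul_sum, card_insert_of_notMem ha]
  congr 1 <;> refine sum_congr rfl fun T hT => ?_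
  · have haT : a ∉ T := fun h => ha (mem_powerset.1 hT h)
    have hTA := card_le_card (mem_powerset.1 hT)
    rw [card_insert_of_notMem haT, Nat.add_sub_add_right, pow_succ]
    ring
  · have hTA := card_le_card (mem_powerset.1 hT)
    rw [Nat.sub_add_comm hTA, pow_succ]
    ring

theorem bernoulliExpect_union (h : Disjoint A B) (f : Finset α → ℝ) :
    bernoulliExpect p (A ∪ B) f =
      bernoulliExpect p A fun T => bernoulliExpect p B fun U => f (T ∪ U) := by
  induction A using Finset.induction_on generalizing f with
  | empty => simp [bernoulliExpect_empty]
  | insert a A ha ih =>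
    rw [disjoint_insert_left] at h
    rw [insert_union, bernoulliExpect_insert (by simp [ha, h.1]), ih h.2, ih h.2,
      bernoulliExpect_insert ha]
    simp only [insert_union]

theorem bernoulliExpect_image {β : Type*} {Z : Finset β} {c : β → α} (hc : Set.InjOn c Z)
    (f : Finset α → ℝ) :
    bernoulliExpect p (Z.image c) f = bernoulliExpect p Z fun T => f (T.image c) := by
  rw [bernoulliExpect, powerset_image, sum_image (image_injOn_powerset_of_injOn hc),
    card_image_of_injOn hc]
  refine sum_congr rfl fun T hT => ?_
  rw [card_image_of_injOn (hc.mono (mem_powerset.1 hT))]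

theorem bernoulliExpect_inter (hBA : B ⊆ A) (f : Finset α → ℝ) :
    bernoulliExpect p A (fun T => f (T ∩ B)) = bernoulliExpect p B f := by
  rw [← sdiff_union_of_subset hBA, bernoulliExpect_union disjoint_sdiff_self_left]
  refine (bernoulliExpect_congr (g := fun _ => bernoulliExpect p B f) fun T hT =>
    bernoulliExpect_congr fun U hU => ?_).trans (bernoulliExpect_const _ _)
  rw [union_inter_distrib_right, disjoint_iff_inter_eq_empty.1 (disjoint_of_subset_left hT
    disjoint_sdiff_self_left), empty_union, inter_eq_left.2 hU]

theorem bernoulliExpect_mono (hp₀ : 0 ≤ p) (hp₁ : p ≤ 1) (h : ∀ T ⊆ A, f T ≤ g T) :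
    bernoulliExpect p A f ≤ bernoulliExpect p A g :=
  sum_le_sum fun T hT => mul_le_mul_of_nonneg_left (h T (mem_powerset.1 hT))
    (mul_nonneg (pow_nonneg hp₀ _) (pow_nonneg (sub_nonneg.2 hp₁) _))

/-- Only the empty subset, of weight `(1 - p) ^ #A`, can make `f` exceed `g`. -/
theorem bernoulliExpect_sub_le (hp₀ : 0 ≤ p) (hp₁ : p ≤ 1) {d : ℝ}
    (h : ∀ T ⊆ A, T ≠ ∅ → f T ≤ g T) (h₀ : f ∅ - g ∅ ≤ d) :
    bernoulliExpect p A f - bernoulliExpect p A g ≤ (1 - p) ^ #A * d := by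
  have hw : ∀ T : Finset α, 0 ≤ p ^ #T * (1 - p) ^ (#A - #T) := fun T =>
    mul_nonneg (pow_nonneg hp₀ _) (pow_nonneg (sub_nonneg.2 hp₁) _)
  rw [bernoulliExpect, bernoulliExpect, ← sum_sub_distrib,
    ← add_sum_erase _ _ (empty_mem_powerset A)]
  have hrest : ∑ T ∈ A.powerset.erase ∅,
      (p ^ #T * (1 - p) ^ (#A - #T) * f T - p ^ #T * (1 - p) ^ (#A - #T) * g T) ≤ 0 :=
    sum_nonpos fun T hT => by
      rw [← mul_sub]
      exact mul_nonpos_of_nonneg_of_nonpos (hw T) (sub_nonpos.2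
        (h T (mem_powerset.1 (mem_of_mem_erase hT)) (ne_of_mem_erase hT)))
  have h₀' : (1 - p) ^ #A * (f ∅ - g ∅) ≤ (1 - p) ^ #A * d :=
    mul_le_mul_of_nonneg_left h₀ (pow_nonneg (sub_nonneg.2 hp₁) _)
  simp only [card_empty, pow_zero, one_mul, Nat.sub_zero]
  linarith

theorem sum_fiber_mul_eq_bernoulliExpect {β : Type*} (A : Finset α) {t : Finset β}
    (φ : Finset α → β) (hφ : ∀ T ⊆ A, φ T ∈ t) (F : β → ℝ) :
    ∑ y ∈ t, (∑ T ∈ A.powerset.filter (φ · = y), p ^ #T * (1 - p) ^ (#A - #T)) * F y =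
      bernoulliExpect p A fun T => F (φ T) := by
  rw [bernoulliExpect, ← sum_fiberwise_of_maps_to (g := φ) (t := t)
    fun T hT => hφ T (mem_powerset.1 hT)]
  refine sum_congr rfl fun y _ => ?_
  rw [sum_mul]
  exact sum_congr rfl fun T hT => by rw [(mem_filter.1 hT).2]

end Bernoulli

section FinsetInf

variable {L : Type*} [Lattice L] [OrderTop L]

theorem inf_insert_lt {s z : L} {T : Finset L} (hz : z ∈ T) (hzs : z < s) :
    (insert s T).inf id < s :=
  (inf_le (mem_insert_of_mem hz)).trans_lt hzs

theorem inf_insert_image_le {x s : L} (hxs : x ≤ s) {T Z : Finset L}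
    (hZ : ∀ z ∈ T, ¬ x ≤ z → z ∈ Z) (S : Finset L) :
    (insert x ((T ∩ Z).image (x ⊓ ·) ∪ S)).inf id ≤ (insert s T).inf id := by
  have hx : (insert x ((T ∩ Z).image (x ⊓ ·) ∪ S)).inf id ≤ x := inf_le (mem_insert_self _ _)
  refine Finset.le_inf fun b hb => ?_
  rcases mem_insert.1 hb with rfl | hbT
  · exact hx.trans hxs
  by_cases hxb : x ≤ b
  · exact hx.trans hxb
  refine (inf_le (mem_insert_of_mem (mem_union_left _ (mem_image_of_mem _ ?_)))).trans
    inf_le_right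
  exact mem_inter.2 ⟨hbT, hZ b hbT hxb⟩

end FinsetInf

section ExpectedTime

variable {L : Type*} [Fintype L] [Lattice L] [BoundedOrder L] {p : ℝ} {E E' : L → ℝ}

theorem IsUngarExp.eq_one_add (hE : IsUngarExp p E) {x : L} (hx : x ≠ ⊥) :
    E x = 1 + bernoulliExpect p (ungarCov x) fun S => E ((insert x S).inf id) := by
  rw [hE.2 x hx, ← sum_fiber_mul_eq_bernoulliExpect _ _ fun _ _ => mem_univ _]
  rfl

/-- The covers `c z`, `z ∈ Z`, of `x` are chosen exactly when `z` is chosen from a larger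
index set `A`; the other covers of `x` are chosen independently. -/
theorem IsUngarExp.sub_one_eq_bernoulliExpect_of_injOn (hE : IsUngarExp p E) {x : L}
    (hx : x ≠ ⊥) {A Z : Finset L} (hZA : Z ⊆ A) {c : L → L} (hc : Set.InjOn c Z)
    (hcx : Z.image c ⊆ ungarCov x) :
    E x - 1 = bernoulliExpect p A fun T => bernoulliExpect p (ungarCov x \ Z.image c)
      fun S => E ((insert x ((T ∩ Z).image c ∪ S)).inf id) := by
  rw [bernoulliExpect_inter hZA fun T => bernoulliExpect p (ungarCov x \ Z.image c)
      fun S => E ((insert x (T.image c ∪ S)).inf id),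
    hE.eq_one_add hx, add_sub_cancel_left]
  conv_lhs => rw [← union_sdiff_of_subset hcx]
  rw [bernoulliExpect_union disjoint_sdiff, bernoulliExpect_image hc]

theorem IsSpineExp.eq_one_add (hL : IsExtremal L) (hE' : IsSpineExp p E') {s : L}
    (hs : s ∈ spineF L) (hs₀ : s ≠ ⊥) :
    E' s = 1 + bernoulliExpect p (spineCov L s) fun T => E' ((insert s T).inf id) := by
  rw [hE'.2 s hs hs₀, ← sum_fiber_mul_eq_bernoulliExpect (spineCov L s) _
    fun _ hT => hL.inf_mem_spineF hs (hT.trans (filter_subset _ _))]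
  rfl

theorem IsSpineExp.nonneg (hL : IsExtremal L) (hp : 0 < p) (hp₁ : p ≤ 1)
    (hE' : IsSpineExp p E') {s : L} (hs : s ∈ spineF L) : 0 ≤ E' s := by
  induction s using WellFoundedLT.induction with
  | _ s ih =>
  rcases eq_or_ne s ⊥ with rfl | hs₀
  · exact hE'.1.ge
  have h := bernoulliExpect_sub_le (A := spineCov L s) (f := fun _ => 0) (d := -E' s) hp.le hp₁
    (fun T hT hT₀ => by
      obtain ⟨z, hz⟩ := nonempty_iff_ne_empty.2 hT₀
      exact ih _ (inf_insert_lt hz (mem_filter.1 (hT hz)).2.1)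
        (hL.inf_mem_spineF hs (hT.trans (filter_subset _ _))))
    (by simp)
  rw [bernoulliExpect_const, ← sub_eq_of_eq_add' (hE'.eq_one_add hL hs hs₀)] at h
  have hq : (1 - p) ^ #(spineCov L s) < 1 :=
    pow_lt_one₀ (by linarith) (by linarith) (hL.spineCov_nonempty hs₀).card_pos.ne'
  nlinarith

/-- In the coupled step, every outcome except the one where neither chain moves is covered by
`ihs` or `ihx`; that outcome has weight `(1 - p) ^ (#(spineCov L s) + #R) < 1`. -/
theorem IsUngarExp.le_of_forall_lt (hL : IsExtremal L) (hp : 0 < p) (hp₁ : p ≤ 1)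
    (hE : IsUngarExp p E) (hE' : IsSpineExp p E') {s x : L} (hs : s ∈ spineF L) (hxs : x ≤ s)
    (hx₀ : x ≠ ⊥) (ihs : ∀ t ∈ spineF L, t < s → ∀ y ≤ t, E y ≤ E' t)
    (ihx : ∀ y < x, y ≤ s → E y ≤ E' s) : E x ≤ E' s := by
  set Z := (spineCov L s).filter (¬ x ≤ ·)
  set R := ungarCov x \ Z.image (x ⊓ ·)
  have hsub : Z.image (x ⊓ ·) ⊆ ungarCov x := image_subset_iff.2 fun z hz =>
    mem_filter.2 ⟨mem_univ _,
      hL.inf_covBy_of_mem_spineCov hs (mem_filter.1 hz).1 hxs (mem_filter.1 hz).2⟩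
  set inner : Finset L → ℝ := fun T =>
    bernoulliExpect p R fun S => E ((insert x (T.image (x ⊓ ·) ∪ S)).inf id)
  have hEx : E x - 1 = bernoulliExpect p (spineCov L s) fun T => inner (T ∩ Z) :=
    hE.sub_one_eq_bernoulliExpect_of_injOn hx₀ (filter_subset _ _)
      (hL.injOn_inf_spineCov hs hxs) hsub
  have hEs : E' s - 1 = bernoulliExpect p (spineCov L s) fun T => E' ((insert s T).inf id) := by
    rw [hE'.eq_one_add hL hs (ne_bot_of_le_ne_bot hx₀ hxs), add_sub_cancel_left]
  have hT : ∀ T ⊆ spineCov L s, T ≠ ∅ → inner (T ∩ Z) ≤ E' ((insert s T).inf id) := by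
    intro T hT hT₀
    obtain ⟨z, hz⟩ := nonempty_iff_ne_empty.2 hT₀
    have hle := inf_insert_image_le hxs (T := T) (Z := Z) fun z hz hxz => mem_filter.2 ⟨hT hz, hxz⟩
    refine (bernoulliExpect_mono hp.le hp₁ fun S _ => ihs _ ?_ ?_ _ (hle S)).trans
      (bernoulliExpect_const _ _).le
    · exact hL.inf_mem_spineF hs (hT.trans (filter_subset _ _))
    · exact inf_insert_lt hz (mem_filter.1 (hT hz)).2.1
  have h₀ : inner (∅ ∩ Z) - E' ((insert s (∅ : Finset L)).inf id) ≤
      (1 - p) ^ #R * (E x - E' s) := by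
    have := bernoulliExpect_sub_le (A := R) (f := fun S => E ((insert x S).inf id))
      (g := fun _ => E' s) (d := E x - E' s) hp.le hp₁ (fun S hS hS₀ => by
        obtain ⟨w, hw⟩ := nonempty_iff_ne_empty.2 hS₀
        have hwx : w ⋖ x := (mem_filter.1 (mem_sdiff.1 (hS hw)).1).2
        exact ihx _ (inf_insert_lt hw hwx.lt) ((inf_le (mem_insert_self _ _)).trans hxs))
      (by simp)
    simpa [inner, bernoulliExpect_const] using this
  have key := bernoulliExpect_sub_le hp.le hp₁ hT h₀
  rw [← hEx, ← hEs] at key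
  have hq : (1 - p) ^ #(spineCov L s) * (1 - p) ^ #R < 1 :=
    mul_lt_one_of_nonneg_of_lt_one_left (pow_nonneg (by linarith) _)
      (pow_lt_one₀ (by linarith) (by linarith) (hL.spineCov_nonempty
        (ne_bot_of_le_ne_bot hx₀ hxs)).card_pos.ne')
      (pow_le_one₀ (by linarith) (by linarith))
  nlinarith

theorem IsUngarExp.le_of_isSpineExp (hL : IsExtremal L) (hp : 0 < p) (hp₁ : p ≤ 1)
    (hE : IsUngarExp p E) (hE' : IsSpineExp p E') {s : L} (hs : s ∈ spineF L) {x : L}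
    (hxs : x ≤ s) : E x ≤ E' s := by
  induction s using WellFoundedLT.induction generalizing x with
  | _ s ihs =>
  induction x using WellFoundedLT.induction with
  | _ x ihx =>
  rcases eq_or_ne x ⊥ with rfl | hx₀
  · exact hE.1 ▸ hE'.nonneg hL hp hp₁ hs
  exact hE.le_of_forall_lt hL hp hp₁ hE' hs hxs hx₀ (fun t ht hts y hyt => ihs t hts ht hyt)
    fun y hyx hys => ihx y hyx hys

end ExpectedTime

/-- For a finite trim lattice `L` and `p ∈ (0,1]`, the expected
top-to-bottom absorption time of the Ungarian Markov chain satisfies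
`𝓔(L) ≤ 𝓔(spine(L))`. -/
theorem stmt_12 {L : Type*} [Fintype L] [Lattice L] [BoundedOrder L]
    (hL : IsTrim L) (p : ℝ) (hp : 0 < p) (hp1 : p ≤ 1)
    (E E' : L → ℝ) (hE : IsUngarExp p E) (hE' : IsSpineExp p E') :
    E ⊤ ≤ E' ⊤ := by
  have hext : IsExtremal L := hL.1
  exact hE.le_of_isSpineExp hext hp hp1 hE' hext.top_mem_spineF le_rfl
end

section
/- Let $\nu$ be a lattice path from $(0,0)$ to $(\ell-n, n)$ using unit north and east steps, with height vector $\mathbf{h}(\nu) = (h_0(\nu), \ldots, h_\ell(\nu))$. Then the componentwise minimum of two $\nu$-bracket vectors is again a $\nu$-bracket vector. -/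
/-!
Only the pattern condition needs an argument. If `min b b'` took the value `k` at `i₁` and `i₃`
and a larger value at some `i₁ < i₂ < i₃`, say with `b i₁ = k`, then `h i₃ ≤ k` forces
`i₃ ≤ f k` because `h` is monotone and `f k` is the last index of height `k`; as `b (f k) = k`,
the indices `i₁ < i₂ < f k` would give a `121` pattern in `b`.
-/

/-- `b` is a `ν`-bracket vector for the lattice path `ν` with height vector `h`
(where `f k` is the largest index at which `h` takes the value `k`):
(I) `b (f k) = k` for all `k`; (II) `h i ≤ b i ≤ n` for all `i`;
(III) `b` avoids the pattern `121`. -/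
def IsBracketVec (ℓ n : ℕ) (h : Fin (ℓ + 1) → ℕ) (f : Fin (n + 1) → Fin (ℓ + 1))
    (b : Fin (ℓ + 1) → ℕ) : Prop :=
  (∀ k : Fin (n + 1), b (f k) = (k : ℕ)) ∧
  (∀ i : Fin (ℓ + 1), h i ≤ b i ∧ b i ≤ n) ∧
  ∀ i1 i2 i3 : Fin (ℓ + 1), i1 < i2 → i2 < i3 → b i1 = b i3 → ¬ b i1 < b i2

theorem monotone_of_forall_succ_eq_or_eq_succ {ℓ : ℕ} {h : Fin (ℓ + 1) → ℕ}
    (hstep : ∀ i : Fin ℓ, h i.succ = h i.castSucc ∨ h i.succ = h i.castSucc + 1) :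
    Monotone h :=
  Fin.monotone_iff_le_succ.mpr fun i => by rcases hstep i with hi | hi <;> omega

theorem Monotone.le_of_apply_le_of_isGreatest {α β : Type*} [LinearOrder α] [PartialOrder β]
    {h : α → β} (hh : Monotone h) {x i : α} (hx : IsGreatest (h ⁻¹' {h x}) x)
    (hi : h i ≤ h x) : i ≤ x := by
  by_contra! hxi
  exact hxi.not_ge (hx.2 (le_antisymm hi (hh hxi.le)))

theorem IsBracketVec.le_of_lt_of_lt {ℓ n : ℕ} {h : Fin (ℓ + 1) → ℕ}
    {f : Fin (n + 1) → Fin (ℓ + 1)} {b : Fin (ℓ + 1) → ℕ} (hb : IsBracketVec ℓ n h f b)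
    {i j : Fin (ℓ + 1)} {k : Fin (n + 1)} (hij : i < j) (hjk : j < f k) (hbi : b i = k) :
    b j ≤ k := by
  have := hb.2.2 i j (f k) hij hjk (by rw [hbi, hb.1 k])
  omega

theorem stmt_14_general (ℓ n : ℕ) (h : Fin (ℓ + 1) → ℕ) (f : Fin (n + 1) → Fin (ℓ + 1))
    (hstep : ∀ i : Fin ℓ, h i.succ = h i.castSucc ∨ h i.succ = h i.castSucc + 1)
    (hf : ∀ k : Fin (n + 1), h (f k) = (k : ℕ) ∧ ∀ i : Fin (ℓ + 1), h i = (k : ℕ) → i ≤ f k)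
    (b b' : Fin (ℓ + 1) → ℕ)
    (hb : IsBracketVec ℓ n h f b) (hb' : IsBracketVec ℓ n h f b') :
    IsBracketVec ℓ n h f (fun i => min (b i) (b' i)) := by
  refine ⟨fun k => by simp [hb.1 k, hb'.1 k], fun i =>
    ⟨le_min (hb.2.1 i).1 (hb'.2.1 i).1, (min_le_left _ _).trans (hb.2.1 i).2⟩, ?_⟩
  intro i₁ i₂ i₃ h₁₂ h₂₃ heq hlt
  dsimp only at heq hlt
  let k : Fin (n + 1) := ⟨min (b i₁) (b' i₁), by have := (hb.2.1 i₁).2; omega⟩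
  have hfk : IsGreatest (h ⁻¹' {h (f k)}) (f k) :=
    ⟨rfl, fun i hi => (hf k).2 i ((hf k).1 ▸ hi)⟩
  have hh₃ : h i₃ ≤ h (f k) := by
    rw [(hf k).1, show (k : ℕ) = min (b i₁) (b' i₁) from rfl, heq]
    exact le_min (hb.2.1 i₃).1 (hb'.2.1 i₃).1
  have h₃ : i₃ ≤ f k :=
    (monotone_of_forall_succ_eq_or_eq_succ hstep).le_of_apply_le_of_isGreatest hfk hh₃
  rcases min_choice (b i₁) (b' i₁) with hk | hk
  · exact (lt_min_iff.mp hlt).1.not_ge (hb.le_of_lt_of_lt h₁₂ (h₂₃.trans_le h₃) hk.symm)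
  · exact (lt_min_iff.mp hlt).2.not_ge (hb'.le_of_lt_of_lt h₁₂ (h₂₃.trans_le h₃) hk.symm)

/-- For a lattice path `ν` from `(0,0)` to `(ℓ-n, n)` with height
vector `h`, the componentwise minimum of two `ν`-bracket vectors is again a
`ν`-bracket vector. -/
theorem stmt_14 (ℓ n : ℕ) (h : Fin (ℓ + 1) → ℕ) (f : Fin (n + 1) → Fin (ℓ + 1))
    (h0 : h 0 = 0) (hlast : h (Fin.last ℓ) = n)
    (hstep : ∀ i : Fin ℓ, h i.succ = h i.castSucc ∨ h i.succ = h i.castSucc + 1)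
    (hf : ∀ k : Fin (n + 1), h (f k) = (k : ℕ) ∧ ∀ i : Fin (ℓ + 1), h i = (k : ℕ) → i ≤ f k)
    (b b' : Fin (ℓ + 1) → ℕ)
    (hb : IsBracketVec ℓ n h f b) (hb' : IsBracketVec ℓ n h f b') :
    IsBracketVec ℓ n h f (fun i => min (b i) (b' i)) :=
  stmt_14_general ℓ n h f hstep hf b b' hb hb'
end

section
/- Let $\nu$ be a lattice path, and suppose $1 \leq k \leq n$, $f_{k-1} < i < f_k$, and $h_i(\nu)+1 \leq m \leq n$. In the lattice of $\nu$-bracket vectors under componentwise order, $\kappa(\mathfrak{b}^{i,m}) = \mathfrak{c}^{i,m}$; that is, $\mathfrak{b}^{i,m} \wedge \mathfrak{c}^{i,m}$ is covered by $\mathfrak{b}^{i,m}$ and $\mathfrak{b}^{i,m} \vee \mathfrak{c}^{i,m}$ covers $\mathfrak{c}^{i,m}$. -/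
/-!
`𝔟^{i,m}` and `𝔠^{i,m}` differ only at position `i`, where they take the values `m` and `m - 1`;
everywhere else `𝔟 ≤ 𝔠`. Hence the meet is `𝔟` lowered by one at `i`, a cover. For the join, a
bracket vector `c ≥ 𝔠` with `c i = m - 1` must equal `𝔠`: on `(i, f_{m-1})` non-crossing with the
pair `c i = c f_{m-1} = m - 1` caps `c` by `m - 1`, and elsewhere `𝔠` is already maximal. So every
bracket vector strictly above `𝔠` exceeds `m - 1` at `i`, hence lies above `𝔟` and above the join.
-/

theorem covBy_of_isLUB_pair {α : Type*} [PartialOrder α] {a b j : α} (hj : IsLUB {a, b} j)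
    (hab : ¬a ≤ b) (h : ∀ x, b < x → a ≤ x) : b ⋖ j := by
  refine ⟨(hj.1 (by simp)).lt_of_ne ?_, fun x hbx hxj => ?_⟩
  · rintro rfl
    exact hab (hj.1 (by simp))
  · exact hxj.not_ge (hj.2 (by rintro y (rfl | rfl); exacts [h x hbx, hbx.le]))

section BracketVectors

variable {ℓ n : ℕ} {h : Fin (ℓ + 1) → ℕ} {f : Fin (n + 1) → Fin (ℓ + 1)}

theorem monotone_of_step
    (hstep : ∀ i : Fin ℓ, h i.succ = h i.castSucc ∨ h i.succ = h i.castSucc + 1) :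
    Monotone h :=
  Fin.monotone_iff_le_succ.2 fun i => by rcases hstep i with hi | hi <;> omega

def IsLastOfHeight (h : Fin (ℓ + 1) → ℕ) (f : Fin (n + 1) → Fin (ℓ + 1)) : Prop :=
  ∀ k : Fin (n + 1), h (f k) = (k : ℕ) ∧ ∀ i, h i = (k : ℕ) → i ≤ f k

theorem IsLastOfHeight.le_iff (hf : IsLastOfHeight h f) (hmono : Monotone h)
    {r : Fin (ℓ + 1)} {s : Fin (n + 1)} : r ≤ f s ↔ h r ≤ s := by
  refine ⟨fun hr => (hf s).1 ▸ hmono hr, fun hr => ?_⟩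
  by_contra! hlt
  have := (hf s).1 ▸ hmono hlt.le
  exact hlt.not_ge ((hf s).2 r (by omega))

theorem IsLastOfHeight.lt_iff (hf : IsLastOfHeight h f) (hmono : Monotone h)
    {r : Fin (ℓ + 1)} {s : Fin (n + 1)} : f s < r ↔ (s : ℕ) < h r := by
  simpa only [not_le] using (hf.le_iff hmono).not

theorem IsLastOfHeight.strictMono (hf : IsLastOfHeight h f) (hmono : Monotone h) :
    StrictMono f :=
  strictMono_of_le_iff_le fun s t => by rw [hf.le_iff hmono, (hf s).1, Fin.le_def]

/-- `𝔟^{i,m}`, with `lo` standing for `f_{k-1}`. -/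
def bVec (h : Fin (ℓ + 1) → ℕ) (lo i : Fin (ℓ + 1)) (m : ℕ) (r : Fin (ℓ + 1)) : ℕ :=
  if lo < r ∧ r ≤ i then m else h r

def cVec (h : Fin (ℓ + 1) → ℕ) (f : Fin (n + 1) → Fin (ℓ + 1)) (i : Fin (ℓ + 1)) (m : ℕ)
    (r : Fin (ℓ + 1)) : ℕ :=
  if ∃ s, r = f s then h r else if i ≤ r ∧ h r < m then m - 1 else n

variable {lo i : Fin (ℓ + 1)} {m : ℕ}

theorem isBracketVec_bVec (hf : IsLastOfHeight h f) (hmono : Monotone h)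
    (hlen : ∀ r, h r ≤ n) (hlo : ∀ r, lo < r ↔ h i ≤ h r) (hgap : ∀ s, f s ≤ lo ∨ i < f s)
    (him : h i < m) (hmn : m ≤ n) : IsBracketVec ℓ n h f (bVec h lo i m) := by
  refine ⟨fun s => ?_, fun r => ?_, ?_⟩
  · rw [bVec, if_neg, (hf s).1]
    rintro ⟨h1, h2⟩
    exact (hgap s).elim h1.not_ge h2.not_gt
  · unfold bVec
    split_ifs with hr
    · have := hmono hr.2; omega
    · exact ⟨le_rfl, hlen r⟩
  · intro i1 i2 i3 h12 h23 heq hlt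
    have := hmono h12.le; have := hmono h23.le
    have := hlo i1; have := hlo i2; have := hlo i3
    unfold bVec at heq hlt
    split_ifs at heq hlt <;> grind

theorem cVec_apply_f (hf : IsLastOfHeight h f) (s : Fin (n + 1)) : cVec h f i m (f s) = s := by
  rw [cVec, if_pos ⟨s, rfl⟩, (hf s).1]

theorem le_cVec (hlen : ∀ r, h r ≤ n) (r : Fin (ℓ + 1)) : h r ≤ cVec h f i m r := by
  have := hlen r
  unfold cVec; split_ifs <;> omega

theorem cVec_le (hmn : m ≤ n) (hlen : ∀ r, h r ≤ n) (r : Fin (ℓ + 1)) : cVec h f i m r ≤ n := by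
  have := hlen r
  unfold cVec; split_ifs <;> omega

theorem cVec_le_pred {r : Fin (ℓ + 1)} (hir : i ≤ r) (hr : h r < m) : cVec h f i m r ≤ m - 1 := by
  unfold cVec; split_ifs <;> omega

theorem isBracketVec_cVec (hf : IsLastOfHeight h f) (hmono : Monotone h)
    (hlen : ∀ r, h r ≤ n) (hmn : m ≤ n) : IsBracketVec ℓ n h f (cVec h f i m) := by
  refine ⟨cVec_apply_f hf, fun r => ⟨le_cVec hlen r, cVec_le hmn hlen r⟩, ?_⟩
  intro i1 i2 i3 h12 h23 heq hlt
  have hC3 : h i3 ≤ cVec h f i m i3 := le_cVec hlen i3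
  by_cases hf1 : ∃ a, i1 = f a
  · obtain ⟨a, rfl⟩ := hf1
    rw [cVec_apply_f hf] at heq
    exact (h12.trans h23).not_ge ((hf.le_iff hmono).2 (heq ▸ hC3))
  · have hC1 : cVec h f i m i1 = if i ≤ i1 ∧ h i1 < m then m - 1 else n := if_neg hf1
    have hC2 : cVec h f i m i2 ≤ n := cVec_le hmn hlen i2
    split_ifs at hC1 with hT
    · have := hmono h23.le
      have := cVec_le_pred (f := f) (hT.1.trans h12.le) (show h i2 < m by omega)
      omega
    · omega

theorem eq_cVec_of_le (hf : IsLastOfHeight h f) (hmono : Monotone h) {c : Fin (ℓ + 1) → ℕ}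
    (hc : IsBracketVec ℓ n h f c) (hle : cVec h f i m ≤ c) (hci : c i = m - 1) (hmn : m ≤ n) :
    c = cVec h f i m := by
  refine le_antisymm (Pi.le_def.2 fun r => ?_) hle
  unfold cVec
  split_ifs with hfr hT
  · obtain ⟨s, rfl⟩ := hfr
    rw [hc.1 s, (hf s).1]
  · obtain rfl | hir := hT.1.eq_or_lt
    · exact hci.le
    · have hrf : r < f ⟨m - 1, by omega⟩ :=
        ((hf.le_iff hmono).2 (by rw [Fin.val_mk]; omega)).lt_of_ne fun he => hfr ⟨_, he⟩
      have := hc.2.2 i r _ hir hrf (by rw [hci, hc.1])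
      omega
  · exact (hc.2.1 r).2

theorem bVec_self (hloi : lo < i) : bVec h lo i m i = m := if_pos ⟨hloi, le_rfl⟩

theorem cVec_self (hgap : ∀ s, f s ≤ lo ∨ i < f s) (hloi : lo < i) (him : h i < m) :
    cVec h f i m i = m - 1 := by
  have hi : ¬∃ s, i = f s := by
    rintro ⟨s, rfl⟩
    exact (hgap s).elim hloi.not_ge (lt_irrefl _)
  rw [cVec, if_neg hi, if_pos ⟨le_rfl, him⟩]

theorem bVec_le_cVec (hlen : ∀ r, h r ≤ n) (hgap : ∀ s, f s ≤ lo ∨ i < f s) (hmn : m ≤ n)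
    {r : Fin (ℓ + 1)} (hri : r ≠ i) : bVec h lo i m r ≤ cVec h f i m r := by
  unfold bVec
  split_ifs with hr
  · have hr' : r < i := hr.2.lt_of_ne hri
    have hnf : ¬∃ s, r = f s := by
      rintro ⟨s, rfl⟩
      exact (hgap s).elim hr.1.not_ge hr'.not_gt
    rwa [cVec, if_neg hnf, if_neg fun hT => hr'.not_ge hT.1]
  · exact le_cVec hlen r

theorem inf_covBy_bVec (hlen : ∀ r, h r ≤ n) (hgap : ∀ s, f s ≤ lo ∨ i < f s) (hloi : lo < i)
    (him : h i < m) (hmn : m ≤ n) :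
    (fun r => min (bVec h lo i m r) (cVec h f i m r)) ⋖ bVec h lo i m := by
  refine Pi.covBy_iff.2 ⟨i, ?_, fun r hr => min_eq_left (bVec_le_cVec hlen hgap hmn hr)⟩
  rw [bVec_self hloi, cVec_self hgap hloi him, Nat.covBy_iff_add_one_eq]
  omega

theorem bVec_le_of_cVec_lt (hf : IsLastOfHeight h f) (hmono : Monotone h) (hlen : ∀ r, h r ≤ n)
    (hgap : ∀ s, f s ≤ lo ∨ i < f s) (hloi : lo < i) (him : h i < m) (hmn : m ≤ n)
    {c : Fin (ℓ + 1) → ℕ} (hc : IsBracketVec ℓ n h f c) (hCc : cVec h f i m < c) :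
    bVec h lo i m ≤ c := by
  by_contra hBc
  obtain ⟨r, hr⟩ : ∃ r, c r < bVec h lo i m r := by simpa [Pi.le_def] using hBc
  have hri : r = i := by
    by_contra hri
    exact hr.not_ge ((bVec_le_cVec hlen hgap hmn hri).trans (hCc.le r))
  rw [hri] at hr
  have hci : c i = m - 1 := by
    have : cVec h f i m i ≤ c i := hCc.le i
    rw [cVec_self hgap hloi him] at this
    rw [bVec_self hloi] at hr
    omega
  exact hCc.ne (eq_cVec_of_le hf hmono hc hCc.le hci hmn).symm

end BracketVectors

/-- In the lattice of `ν`-bracket vectors under componentwise order,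
`κ(𝔟^{i,m}) = 𝔠^{i,m}`: both are bracket vectors, the meet `𝔟^{i,m} ∧ 𝔠^{i,m}`
(the componentwise minimum) is covered by `𝔟^{i,m}`, and the join
`𝔟^{i,m} ∨ 𝔠^{i,m}` covers `𝔠^{i,m}`. Here `𝔟^{i,m}` is `m` on positions
`f_{k-1}+1, …, i` and `h` elsewhere, while `𝔠^{i,m}` is `s` at `r = f_s`, is `m-1` at
non-`f` indices `r` with `i ≤ r < f_{m-1}` (equivalently `i ≤ r` and `h r < m`), and
is `n` otherwise. -/
theorem stmt_17 (ℓ n : ℕ) (h : Fin (ℓ + 1) → ℕ) (f : Fin (n + 1) → Fin (ℓ + 1))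
    (hlast : h (Fin.last ℓ) = n)
    (hstep : ∀ i : Fin ℓ, h i.succ = h i.castSucc ∨ h i.succ = h i.castSucc + 1)
    (hf : ∀ k : Fin (n + 1), h (f k) = (k : ℕ) ∧ ∀ i : Fin (ℓ + 1), h i = (k : ℕ) → i ≤ f k)
    (k : ℕ) (hk2 : k ≤ n)
    (i : Fin (ℓ + 1))
    (hi1 : f ⟨k - 1, by omega⟩ < i) (hi2 : i < f ⟨k, by omega⟩)
    (m : ℕ) (hm1 : h i + 1 ≤ m) (hm2 : m ≤ n)
    (B C : Fin (ℓ + 1) → ℕ)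
    (hB : B = fun r => if f ⟨k - 1, by omega⟩ < r ∧ r ≤ i then m else h r)
    (hC : C = fun r => if ∃ s : Fin (n + 1), r = f s then h r
      else if i ≤ r ∧ h r < m then m - 1 else n) :
    IsBracketVec ℓ n h f B ∧ IsBracketVec ℓ n h f C ∧
      (∀ bB bM : {v : Fin (ℓ + 1) → ℕ // IsBracketVec ℓ n h f v},
        bB.1 = B → bM.1 = (fun r => min (B r) (C r)) → bM ⋖ bB) ∧
      (∀ bB bC j : {v : Fin (ℓ + 1) → ℕ // IsBracketVec ℓ n h f v},
        bB.1 = B → bC.1 = C → IsLUB {bB, bC} j → bC ⋖ j) := by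
  have hf : IsLastOfHeight h f := hf
  have hmono : Monotone h := monotone_of_step hstep
  have hlen : ∀ r, h r ≤ n := fun r => hlast ▸ hmono (Fin.le_last r)
  have hhi : k - 1 < h i ∧ h i ≤ k := ⟨(hf.lt_iff hmono).1 hi1, (hf.le_iff hmono).1 hi2.le⟩
  have hlo : ∀ r, f ⟨k - 1, by omega⟩ < r ↔ h i ≤ h r := fun r => by
    rw [hf.lt_iff hmono, Fin.val_mk]; omega
  have hgap : ∀ s, f s ≤ f ⟨k - 1, by omega⟩ ∨ i < f s := fun s => by
    refine (le_or_gt (f s) i).imp (fun hsi => ?_) id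
    have hsk := (hf.strictMono hmono).lt_iff_lt.1 (hsi.trans_lt hi2)
    exact (hf.strictMono hmono).monotone (Nat.le_sub_one_of_lt hsk)
  have him : h i < m := by omega
  subst hB hC
  refine ⟨isBracketVec_bVec hf hmono hlen hlo hgap him hm2, isBracketVec_cVec hf hmono hlen hm2,
    ?_, ?_⟩
  · rintro ⟨_, _⟩ ⟨_, _⟩ rfl rfl
    exact CovBy.of_image (OrderEmbedding.subtype _) (inf_covBy_bVec hlen hgap hi1 him hm2)
  · rintro ⟨_, _⟩ ⟨_, _⟩ j rfl rfl hj
    refine covBy_of_isLUB_pair hj (fun hle => ?_) fun c hc =>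
      bVec_le_of_cVec_lt hf hmono hlen hgap hi1 him hm2 c.2 hc
    have : bVec h _ i m i ≤ cVec h f i m i := hle i
    rw [bVec_self hi1, cVec_self hgap hi1 him] at this
    omega
end

section
/- Let $w \in S_n$ be a $312$-avoiding permutation. Then the set of descent bottoms $\mathrm{DB}(w) = \{w(i+1) : i \in \mathrm{Des}(w)\}$ and the set of left-to-right maxima $\mathrm{LRMax}(w) = \{w(i) : w(j) < w(i) \text{ for all } 1 \leq j \leq i-1\}$ form a partition of $[n]$, i.e., they are disjoint and their union is $[n]$. -/
/-!
A value that is not a left-to-right maximum has some larger value before it. If its immediate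
predecessor were smaller, these three entries would form a `312` pattern; so the predecessor is
larger and the value is a descent bottom. Conversely, a descent bottom is preceded by a larger
value, hence is not a left-to-right maximum.
-/

open Finset Equiv

/-- `x` is `312`-avoiding. -/
def Avoids312 {m : ℕ} (x : Equiv.Perm (Fin (m + 1))) : Prop :=
  ¬ ∃ i1 i2 i3 : Fin (m + 1), i1 < i2 ∧ i2 < i3 ∧ x i2 < x i3 ∧ x i3 < x i1

/-- The set of descent bottoms of a permutation: the values `w(i+1)` at descents `i`. -/
def descentBottoms {m : ℕ} (w : Equiv.Perm (Fin (m + 1))) : Finset (Fin (m + 1)) :=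
  (Finset.univ.filter (fun i : Fin m => w i.succ < w i.castSucc)).image
    (fun i => w i.succ)

/-- The set of left-to-right maxima of a permutation: the values `w(i)` exceeding all
earlier values. -/
def lrMaxima {m : ℕ} (w : Equiv.Perm (Fin (m + 1))) : Finset (Fin (m + 1)) :=
  (Finset.univ.filter (fun i : Fin (m + 1) => ∀ j : Fin (m + 1), j < i → w j < w i)).image w

variable {m : ℕ}

theorem apply_succ_mem_descentBottoms (w : Perm (Fin (m + 1))) {k : Fin m}
    (hk : w k.succ < w k.castSucc) : w k.succ ∈ descentBottoms w :=
  mem_image_of_mem _ (mem_filter.2 ⟨mem_univ _, hk⟩)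

theorem apply_mem_lrMaxima_iff (w : Perm (Fin (m + 1))) {i : Fin (m + 1)} :
    w i ∈ lrMaxima w ↔ ∀ j < i, w j < w i := by
  simp [lrMaxima, w.injective.eq_iff]

theorem disjoint_descentBottoms_lrMaxima (w : Perm (Fin (m + 1))) :
    Disjoint (descentBottoms w) (lrMaxima w) := by
  simp only [disjoint_left, descentBottoms, mem_image, mem_filter, mem_univ, true_and,
    forall_exists_index, and_imp]
  rintro _ k hk rfl
  rw [apply_mem_lrMaxima_iff]
  exact fun hmax => (hmax _ Fin.castSucc_lt_succ).not_gt hk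

theorem Avoids312.apply_succ_lt_apply_castSucc {w : Perm (Fin (m + 1))} (hw : Avoids312 w)
    {j : Fin (m + 1)} {k : Fin m} (hj : j < k.succ) (hjk : w k.succ < w j) :
    w k.succ < w k.castSucc := by
  by_contra! hle
  have hlt : w k.castSucc < w k.succ :=
    hle.lt_of_ne (w.injective.ne Fin.castSucc_lt_succ.ne)
  have hjk' : j < k.castSucc := by
    refine (Fin.le_castSucc_iff.2 hj).lt_of_ne ?_
    rintro rfl
    exact lt_asymm hlt hjk
  exact hw ⟨j, k.castSucc, k.succ, hjk', Fin.castSucc_lt_succ, hlt, hjk⟩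

theorem Avoids312.descentBottoms_union_lrMaxima {w : Perm (Fin (m + 1))} (hw : Avoids312 w) :
    descentBottoms w ∪ lrMaxima w = univ := by
  refine eq_univ_of_forall fun x => ?_
  obtain ⟨i, rfl⟩ := w.surjective x
  rw [mem_union, apply_mem_lrMaxima_iff]
  by_cases hmax : ∀ j < i, w j < w i
  · exact Or.inr hmax
  push Not at hmax
  obtain ⟨j, hji, hle⟩ := hmax
  have hlt : w i < w j := hle.lt_of_ne (w.injective.ne hji.ne')
  obtain ⟨k, rfl⟩ := Fin.exists_succ_eq.2 (Fin.ne_zero_of_lt hji)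
  exact Or.inl (apply_succ_mem_descentBottoms w (hw.apply_succ_lt_apply_castSucc hji hlt))

/-- For a `312`-avoiding permutation `w ∈ S_n`, the descent bottoms
and the left-to-right maxima form a partition of `[n]`. -/
theorem stmt_18 {m : ℕ} (w : Equiv.Perm (Fin (m + 1))) (hw : Avoids312 w) :
    Disjoint (descentBottoms w) (lrMaxima w) ∧
      descentBottoms w ∪ lrMaxima w = Finset.univ :=
  ⟨disjoint_descentBottoms_lrMaxima w, hw.descentBottoms_union_lrMaxima⟩
end

section
/- Let $w, w' \in S_n$ with $w' \leq w$ in the (right) weak order. Then every left-to-right maximum of $w$ is a left-to-right maximum of $w'$, i.e., $\mathrm{LRMax}(w) \subseteq \mathrm{LRMax}(w')$. Consequently, if both $w$ and $w'$ are $312$-avoiding, then $\mathrm{DB}(w') \subseteq \mathrm{DB}(w)$. -/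
/-!
A value `a` is a left-to-right maximum of `w` iff every larger value `b` occurs after it,
i.e. iff no pair `(a, b)` is an inversion of `w`. Since inversions of `w'` are inversions
of `w`, left-to-right maxima of `w` stay left-to-right maxima of `w'`.

A descent bottom is never a left-to-right maximum. Conversely, in a `312`-avoiding `w` a
value `a` that is not a left-to-right maximum is a descent bottom: some `b > a` precedes it,
and if the entry `c` just before `a` were smaller than `a`, then `b, c, a` would form a `312`.
-/

open Finset Equiv

/-- The inversion set of a permutation, as a set of pairs of values `(a, b)` with
`a < b` appearing in the wrong order. -/
def invSet {m : ℕ} (w : Equiv.Perm (Fin (m + 1))) : Finset (Fin (m + 1) × Fin (m + 1)) :=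
  Finset.univ.filter
    (fun q : Fin (m + 1) × Fin (m + 1) => q.1 < q.2 ∧ w⁻¹ q.2 < w⁻¹ q.1)

/-- The (right) weak order on `S_n`: containment of inversion sets of values. -/
def weakLe {m : ℕ} (u v : Equiv.Perm (Fin (m + 1))) : Prop := invSet u ⊆ invSet v

section

variable {m : ℕ} {w w' : Perm (Fin (m + 1))}

theorem mem_invSet_iff {a b : Fin (m + 1)} :
    (a, b) ∈ invSet w ↔ a < b ∧ w⁻¹ b < w⁻¹ a := by
  simp [invSet]

theorem mem_lrMaxima_iff {a : Fin (m + 1)} :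
    a ∈ lrMaxima w ↔ ∀ b, a < b → w⁻¹ a < w⁻¹ b := by
  simp only [lrMaxima, mem_image, mem_filter, mem_univ, true_and]
  constructor
  · rintro ⟨i, hi, rfl⟩ b hab
    rw [Perm.inv_def, symm_apply_apply]
    by_contra! hbi
    have hne : w⁻¹ b ≠ i := by rintro rfl; simp at hab
    exact (hi _ (hbi.lt_of_ne hne)).not_gt (by simpa using hab)
  · intro h
    refine ⟨w⁻¹ a, fun j hj => ?_, w.apply_symm_apply a⟩
    rw [Perm.inv_def, apply_symm_apply]
    by_contra! haj
    have hne : a ≠ w j := by rintro rfl; simp at hj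
    exact (h _ (haj.lt_of_ne hne)).not_gt (by simpa using hj)

theorem lrMaxima_subset_of_weakLe (hle : weakLe w' w) : lrMaxima w ⊆ lrMaxima w' := by
  intro a ha
  rw [mem_lrMaxima_iff] at ha ⊢
  intro b hab
  by_contra! hba
  have hne : w'⁻¹ b ≠ w'⁻¹ a := fun h => hab.ne' (w'⁻¹.injective h)
  have hinv := hle (mem_invSet_iff.2 ⟨hab, hba.lt_of_ne hne⟩)
  exact (ha b hab).not_gt (mem_invSet_iff.1 hinv).2

theorem notMem_lrMaxima_of_mem_descentBottoms {a : Fin (m + 1)}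
    (ha : a ∈ descentBottoms w) : a ∉ lrMaxima w := by
  simp only [descentBottoms, mem_image, mem_filter, mem_univ, true_and] at ha
  obtain ⟨i, hdesc, rfl⟩ := ha
  rw [mem_lrMaxima_iff]
  intro h
  have hlt := h _ hdesc
  simp only [Perm.inv_def, symm_apply_apply] at hlt
  exact Fin.castSucc_lt_succ.not_gt hlt

theorem mem_descentBottoms_of_notMem_lrMaxima (hw : Avoids312 w) {a : Fin (m + 1)}
    (ha : a ∉ lrMaxima w) : a ∈ descentBottoms w := by
  rw [mem_lrMaxima_iff] at ha
  push Not at ha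
  obtain ⟨b, hab, hba⟩ := ha
  have hb_before : w⁻¹ b < w⁻¹ a :=
    hba.lt_of_ne fun h => hab.ne' (w⁻¹.injective h)
  obtain ⟨k, hk⟩ : ∃ k : Fin m, k.succ = w⁻¹ a :=
    Fin.exists_succ_eq.2 (Fin.ne_zero_of_lt hb_before)
  have hwk : w k.succ = a := by rw [hk, Perm.inv_def, apply_symm_apply]
  simp only [descentBottoms, mem_image, mem_filter, mem_univ, true_and]
  refine ⟨k, ?_, hwk⟩
  rcases lt_trichotomy (w k.succ) (w k.castSucc) with hdesc | heq | hasc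
  · exact hdesc
  · exact absurd (w.injective heq) Fin.castSucc_lt_succ.ne'
  · have hb_le : w⁻¹ b ≤ k.castSucc := by
      rw [← hk] at hb_before
      exact Fin.le_castSucc_iff.2 hb_before
    have hb_ne : w⁻¹ b ≠ k.castSucc := by
      intro he
      rw [← he, Perm.inv_def, apply_symm_apply, hwk] at hasc
      exact hasc.not_gt hab
    refine absurd ⟨w⁻¹ b, k.castSucc, k.succ, hb_le.lt_of_ne hb_ne, Fin.castSucc_lt_succ, hasc,
      ?_⟩ hw
    rwa [hwk, Perm.inv_def, apply_symm_apply]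

end

/-- If `w' ≤ w` in the weak order on `S_n`, then every left-to-right
maximum of `w` is a left-to-right maximum of `w'`; consequently, if both `w` and `w'`
are `312`-avoiding, then `DB(w') ⊆ DB(w)`. -/
theorem stmt_19 {m : ℕ} (w w' : Equiv.Perm (Fin (m + 1))) (hle : weakLe w' w) :
    lrMaxima w ⊆ lrMaxima w' ∧
      (Avoids312 w → Avoids312 w' → descentBottoms w' ⊆ descentBottoms w) := by
  have hmax := lrMaxima_subset_of_weakLe hle
  refine ⟨hmax, fun hw _ a ha => mem_descentBottoms_of_notMem_lrMaxima hw ?_⟩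
  exact fun h => notMem_lrMaxima_of_mem_descentBottoms ha (hmax h)
end
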